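/- arXiv:1907.00551 — 6 statements merged into one kernel-verified Lean document; each statement's English description precedes it below -/
import Mathlib

section
/- Let m : (0,∞) → [0,∞) be a nondecreasing, locally absolutely continuous function, let n ≥ 1, α ≥ n+1 and τ > 0. Suppose m(r) > 0 for all r > 0, m(τ) ≤ (τ/(2α))^(n+1), and m'(r) + (α/τ)·m(r) ≥ m(r)^(n/(n+1)) for almost every r ∈ (0,τ). Then m'(r) ≥ (1/2)·m(r)^(n/(n+1)) for almost every r ∈ (0,τ), and consequently m(τ) ≥ (τ/(2(n+1)))^(n+1), contradicting the hypothesis; in particular no such function exists. -/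
open MeasureTheory Set Filter

private lemma pow_sub_pow_le_aux (s t : ℝ) (hs : 0 ≤ s) (hst : s ≤ t) :
    ∀ k : ℕ, t ^ (k + 1) - s ^ (k + 1) ≤ (k + 1 : ℝ) * (t - s) * t ^ k := by
  intro k
  induction k with
  | zero => simp
  | succ k ih =>
    have h1 : s ^ (k + 1) ≤ t ^ (k + 1) := pow_le_pow_left₀ hs hst _
    have ht : 0 ≤ t := hs.trans hst
    have h4 : t ^ (k + 2) - t * s ^ (k + 1) ≤ ((k : ℝ) + 1) * (t - s) * t ^ (k + 1) := by
      calc t ^ (k + 2) - t * s ^ (k + 1) = t * (t ^ (k + 1) - s ^ (k + 1)) := by ring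
        _ ≤ t * (((k : ℝ) + 1) * (t - s) * t ^ k) := mul_le_mul_of_nonneg_left ih ht
        _ = ((k : ℝ) + 1) * (t - s) * t ^ (k + 1) := by ring
    have h5 : t * s ^ (k + 1) - s ^ (k + 2) ≤ t ^ (k + 1) * (t - s) := by
      calc t * s ^ (k + 1) - s ^ (k + 2) = s ^ (k + 1) * (t - s) := by ring
        _ ≤ t ^ (k + 1) * (t - s) := mul_le_mul_of_nonneg_right h1 (by linarith)
    have e : k + 1 + 1 = k + 2 := rfl
    rw [e]
    push_cast
    linarith

private lemma rpow_q_npow (n : ℕ) (x : ℝ) (hx : 0 < x) :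
    (x ^ ((1 : ℝ) / ((n : ℝ) + 1))) ^ (n + 1) = x := by
  rw [← Real.rpow_natCast (x ^ ((1 : ℝ) / ((n : ℝ) + 1))) (n + 1), ← Real.rpow_mul hx.le]
  have h : (1 : ℝ) / ((n : ℝ) + 1) * ((n : ℕ) + 1 : ℕ) = 1 := by
    push_cast
    field_simp
  rw [h, Real.rpow_one]

private lemma rpow_q_npow_n (n : ℕ) (x : ℝ) (hx : 0 < x) :
    (x ^ ((1 : ℝ) / ((n : ℝ) + 1))) ^ n = x ^ ((n : ℝ) / ((n : ℝ) + 1)) := by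
  rw [← Real.rpow_natCast (x ^ ((1 : ℝ) / ((n : ℝ) + 1))) n, ← Real.rpow_mul hx.le]
  congr 1
  field_simp

private lemma rpow_split (n : ℕ) (x : ℝ) (hx : 0 < x) :
    x = x ^ ((1 : ℝ) / ((n : ℝ) + 1)) * x ^ ((n : ℝ) / ((n : ℝ) + 1)) := by
  rw [← Real.rpow_add hx]
  have h : (1 : ℝ) / ((n : ℝ) + 1) + (n : ℝ) / ((n : ℝ) + 1) = 1 := by
    have : ((n : ℝ) + 1) ≠ 0 := by positivity
    field_simp
    ring
  rw [h, Real.rpow_one]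

private lemma stepA (m m' : ℝ → ℝ) (a b c : ℝ) (ha : 0 < a) (hab : a < b) (hc : 0 < c)
    (hmono : MonotoneOn m (Ioi 0))
    (hACab : m b - m a = ∫ r in a..b, m' r)
    (hderiv : ∀ᵐ r ∂(volume : Measure ℝ), r ∈ Ioo a b → HasDerivAt m (m' r) r)
    (hge : ∀ᵐ r ∂(volume : Measure ℝ), r ∈ Ioo a b → c ≤ m' r) :
    c * (b - a) ≤ m b - m a := by
  by_cases hint : IntervalIntegrable m' volume a b
  · rw [hACab]
    have h2 : (volume : Measure ℝ).restrict (Ioo a b) = volume.restrict (Icc a b) :=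
      Measure.restrict_congr_set Ioo_ae_eq_Icc
    have h1 : (fun _ : ℝ => c) ≤ᵐ[(volume : Measure ℝ).restrict (Icc a b)] m' := by
      rw [← h2]
      exact (ae_restrict_iff' measurableSet_Ioo).2 hge
    calc c * (b - a) = ∫ _ in a..b, c := by
          rw [intervalIntegral.integral_const, smul_eq_mul]; ring
      _ ≤ ∫ r in a..b, m' r :=
          intervalIntegral.integral_mono_ae_restrict hab.le intervalIntegrable_const hint h1
  · exfalso
    have hmb : m b = m a := by
      have h0 := hACab
      rw [intervalIntegral.integral_undef hint] at h0
      linarith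
    have hconst : ∀ x ∈ Icc a b, m x = m a := by
      intro x hx
      have hx0 : x ∈ Ioi (0 : ℝ) := lt_of_lt_of_le ha hx.1
      have h1 : m x ≤ m b := hmono hx0 (mem_Ioi.2 (ha.trans hab)) hx.2
      have h2 : m a ≤ m x := hmono (mem_Ioi.2 ha) hx0 hx.1
      rw [hmb] at h1
      linarith
    have hres : (volume : Measure ℝ).restrict (Ioo a b) ≠ 0 := by
      rw [ne_eq, Measure.restrict_eq_zero, Real.volume_Ioo]
      simp only [ENNReal.ofReal_eq_zero, not_le]
      linarith
    haveI : (ae ((volume : Measure ℝ).restrict (Ioo a b))).NeBot := ae_neBot.2 hres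
    have hae : ∀ᵐ r ∂((volume : Measure ℝ).restrict (Ioo a b)),
        r ∈ Ioo a b ∧ (r ∈ Ioo a b → HasDerivAt m (m' r) r) ∧ (r ∈ Ioo a b → c ≤ m' r) :=
      (ae_restrict_mem measurableSet_Ioo).and (ae_restrict_of_ae (hderiv.and hge))
    obtain ⟨r, hrmem, hrd, hrc⟩ := hae.exists
    have hnear : m =ᶠ[nhds r] fun _ => m a := by
      filter_upwards [Ioo_mem_nhds hrmem.1 hrmem.2] with x hx
      exact hconst x (Ioo_subset_Icc_self hx)
    have h0 : HasDerivAt m 0 r := (hasDerivAt_const r (m a)).congr_of_eventuallyEq hnear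
    have hz : m' r = 0 := (hrd hrmem).unique h0
    have := hrc hrmem
    linarith

set_option maxHeartbeats 1000000 in
private lemma stepY (n : ℕ) (hn : 1 ≤ n) (m m' : ℝ → ℝ) (c T : ℝ) (hc : 0 < c)
    (hmono : MonotoneOn m (Ioi 0)) (hpos : ∀ r : ℝ, 0 < r → 0 < m r)
    (hAC : ∀ a b : ℝ, 0 < a → a ≤ b → m b - m a = ∫ r in a..b, m' r)
    (hderiv : ∀ᵐ r ∂(volume : Measure ℝ), r ∈ Ioo 0 T → HasDerivAt m (m' r) r)
    (hODE : ∀ᵐ r ∂(volume : Measure ℝ), r ∈ Ioo 0 T →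
      c * m r ^ ((n : ℝ) / ((n : ℝ) + 1)) ≤ m' r)
    (a u v D : ℝ) (ha : 0 < a) (hau : a ≤ u) (huv : u < v) (hvT : v ≤ T)
    (hD : D = c * (v - u) / ((n : ℝ) + 1)) :
    m u ^ ((1 : ℝ) / ((n : ℝ) + 1)) +
      D * (m a ^ ((1 : ℝ) / ((n : ℝ) + 1)) / (m a ^ ((1 : ℝ) / ((n : ℝ) + 1)) + D)) ^ n
      ≤ m v ^ ((1 : ℝ) / ((n : ℝ) + 1)) := by
  have hu0 : 0 < u := lt_of_lt_of_le ha hau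
  have hv0 : 0 < v := hu0.trans huv
  have hn1 : (0 : ℝ) < (n : ℝ) + 1 := by positivity
  have hD0 : 0 < D := by rw [hD]; exact div_pos (mul_pos hc (by linarith)) hn1
  set q : ℝ := (1 : ℝ) / ((n : ℝ) + 1) with hqdef
  set ya : ℝ := m a ^ q with hya
  set yu : ℝ := m u ^ q with hyu
  set yv : ℝ := m v ^ q with hyv
  have hya0 : 0 < ya := Real.rpow_pos_of_pos (hpos a ha) q
  have hyu0 : 0 < yu := Real.rpow_pos_of_pos (hpos u hu0) q
  have hyv0 : 0 < yv := Real.rpow_pos_of_pos (hpos v hv0) q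
  have hyau : ya ≤ yu :=
    Real.rpow_le_rpow (hpos a ha).le (hmono (mem_Ioi.2 ha) (mem_Ioi.2 hu0) hau) (by positivity)
  set ρ : ℝ := (ya / (ya + D)) ^ n with hρ
  set d : ℝ := D * ρ with hd
  have hρ0 : 0 ≤ ρ := by positivity
  have hρ1 : ρ < 1 := by
    apply pow_lt_one₀ (by positivity) _ (by omega)
    rw [div_lt_one (by linarith)]
    linarith
  have hd0 : 0 ≤ d := by positivity
  have hdD : d < D := by
    rw [hd]
    nlinarith
  -- step 1: integral lower bound
  have step1 : c * (v - u) * m u ^ ((n : ℝ) / ((n : ℝ) + 1)) ≤ m v - m u := by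
    have hcp : 0 < c * m u ^ ((n : ℝ) / ((n : ℝ) + 1)) := by
      have := Real.rpow_pos_of_pos (hpos u hu0) ((n : ℝ) / ((n : ℝ) + 1))
      positivity
    have hsub : Ioo u v ⊆ Ioo 0 T := fun x hx => ⟨hu0.trans hx.1, lt_of_lt_of_le hx.2 hvT⟩
    have h := stepA m m' u v (c * m u ^ ((n : ℝ) / ((n : ℝ) + 1))) hu0 huv hcp hmono
      (hAC u v hu0 huv.le)
      (hderiv.mono fun r hr hrm => hr (hsub hrm))
      (by
        filter_upwards [hODE] with r hr hrm
        have h1 := hr (hsub hrm)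
        have h2 : m u ^ ((n : ℝ) / ((n : ℝ) + 1)) ≤ m r ^ ((n : ℝ) / ((n : ℝ) + 1)) :=
          Real.rpow_le_rpow (hpos u hu0).le
            (hmono (mem_Ioi.2 hu0) (mem_Ioi.2 (hu0.trans hrm.1)) hrm.1.le) (by positivity)
        nlinarith)
    linarith
  -- conclude by contradiction
  by_contra hcon
  push_neg at hcon
  have hmu : m u = yu ^ (n + 1) := (rpow_q_npow n (m u) (hpos u hu0)).symm
  have hmv : m v = yv ^ (n + 1) := (rpow_q_npow n (m v) (hpos v hv0)).symm
  have hmup : m u ^ ((n : ℝ) / ((n : ℝ) + 1)) = yu ^ n := (rpow_q_npow_n n (m u) (hpos u hu0)).symm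
  -- m v ≤ yu^{n+1} + (n+1) d (yu+d)^n
  have h1 : yv ^ (n + 1) ≤ (yu + d) ^ (n + 1) :=
    pow_le_pow_left₀ hyv0.le (by linarith) _
  have h2 : (yu + d) ^ (n + 1) - yu ^ (n + 1) ≤ ((n : ℝ) + 1) * d * (yu + d) ^ n := by
    have := pow_sub_pow_le_aux yu (yu + d) hyu0.le (by linarith) n
    calc (yu + d) ^ (n + 1) - yu ^ (n + 1) ≤ ((n : ℝ) + 1) * ((yu + d) - yu) * (yu + d) ^ n :=
          this
      _ = ((n : ℝ) + 1) * d * (yu + d) ^ n := by ring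
  have h3 : c * (v - u) * yu ^ n ≤ ((n : ℝ) + 1) * d * (yu + d) ^ n := by
    rw [← hmup]
    calc c * (v - u) * m u ^ ((n : ℝ) / ((n : ℝ) + 1)) ≤ m v - m u := step1
      _ = yv ^ (n + 1) - yu ^ (n + 1) := by rw [hmu, hmv]
      _ ≤ ((n : ℝ) + 1) * d * (yu + d) ^ n := by linarith
  have hnd : ((n : ℝ) + 1) * d = c * (v - u) * ρ := by rw [hd, hD]; field_simp
  have h4 : yu ^ n ≤ ρ * (yu + d) ^ n := by
    have hcv : 0 < c * (v - u) := mul_pos hc (by linarith)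
    have heq : ((n : ℝ) + 1) * d * (yu + d) ^ n = c * (v - u) * (ρ * (yu + d) ^ n) := by
      rw [hnd]; ring
    have h3' : c * (v - u) * (yu ^ n) ≤ c * (v - u) * (ρ * (yu + d) ^ n) := heq ▸ h3
    exact le_of_mul_le_mul_left h3' hcv
  have h5 : yu ^ n ≤ ((ya / (ya + D)) * (yu + d)) ^ n := by
    rw [mul_pow]
    exact h4
  have h6 : yu ≤ (ya / (ya + D)) * (yu + d) := by
    have hb : (0 : ℝ) ≤ (ya / (ya + D)) * (yu + d) :=
      mul_nonneg (div_nonneg hya0.le (by linarith)) (by linarith)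
    exact (pow_le_pow_iff_left₀ hyu0.le hb (by omega)).1 h5
  have h7 : yu * (ya + D) ≤ ya * (yu + d) := by
    rw [div_mul_eq_mul_div, le_div_iff₀ (by linarith : (0 : ℝ) < ya + D)] at h6
    exact h6
  have c1 : ya * d < ya * D := mul_lt_mul_of_pos_left hdD hya0
  have c2 : ya * D ≤ yu * D := mul_le_mul_of_nonneg_right hyau hD0.le
  nlinarith [h7, c1, c2]

private lemma stepChain (n : ℕ) (hn : 1 ≤ n) (m m' : ℝ → ℝ) (c T : ℝ) (hc : 0 < c)
    (hmono : MonotoneOn m (Ioi 0)) (hpos : ∀ r : ℝ, 0 < r → 0 < m r)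
    (hAC : ∀ a b : ℝ, 0 < a → a ≤ b → m b - m a = ∫ r in a..b, m' r)
    (hderiv : ∀ᵐ r ∂(volume : Measure ℝ), r ∈ Ioo 0 T → HasDerivAt m (m' r) r)
    (hODE : ∀ᵐ r ∂(volume : Measure ℝ), r ∈ Ioo 0 T →
      c * m r ^ ((n : ℝ) / ((n : ℝ) + 1)) ≤ m' r)
    (a b : ℝ) (ha : 0 < a) (hab : a < b) (hbT : b ≤ T) (N : ℕ) (hN : 1 ≤ N) :
    m a ^ ((1 : ℝ) / ((n : ℝ) + 1)) +
      c * (b - a) / ((n : ℝ) + 1) *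
        (m a ^ ((1 : ℝ) / ((n : ℝ) + 1)) /
          (m a ^ ((1 : ℝ) / ((n : ℝ) + 1)) + c * ((b - a) / (N : ℝ)) / ((n : ℝ) + 1))) ^ n
      ≤ m b ^ ((1 : ℝ) / ((n : ℝ) + 1)) := by
  have hn1 : (0 : ℝ) < (n : ℝ) + 1 := by positivity
  have hN0 : (0 : ℝ) < (N : ℝ) := by exact_mod_cast hN
  set q : ℝ := (1 : ℝ) / ((n : ℝ) + 1) with hq
  set h : ℝ := (b - a) / (N : ℝ) with hh
  have hh0 : 0 < h := div_pos (by linarith) hN0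
  set D : ℝ := c * h / ((n : ℝ) + 1) with hD
  set ya : ℝ := m a ^ q with hya
  set d : ℝ := D * (ya / (ya + D)) ^ n with hd
  have key : ∀ k : ℕ, k ≤ N → ya + k * d ≤ m (a + k * h) ^ q := by
    intro k
    induction k with
    | zero => intro _; simp [hya]
    | succ k ih =>
      intro hkN
      have hk : k ≤ N := Nat.le_of_succ_le hkN
      have ihk := ih hk
      set u : ℝ := a + k * h with hu
      set v : ℝ := a + (k + 1 : ℕ) * h with hv
      have hau : a ≤ u := by
        rw [hu]
        have : (0 : ℝ) ≤ (k : ℝ) * h := by positivity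
        linarith
      have huv : u < v := by
        rw [hu, hv]
        push_cast
        nlinarith
      have hvT : v ≤ T := by
        have hvb : v ≤ b := by
          rw [hv]
          push_cast
          have hkN' : ((k : ℝ) + 1) ≤ (N : ℝ) := by exact_mod_cast hkN
          have h1 : ((k : ℝ) + 1) * h ≤ (N : ℝ) * h :=
            mul_le_mul_of_nonneg_right hkN' hh0.le
          have h2 : (N : ℝ) * h = b - a := by rw [hh]; field_simp
          linarith
        linarith
      have hvu : v - u = h := by rw [hu, hv]; push_cast; ring
      have hstep := stepY n hn m m' c T hc hmono hpos hAC hderiv hODE a u v D ha hau huv hvT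
        (by rw [hD, hvu])
      have hvq : ya + (k : ℝ) * d + d ≤ m v ^ q := by
        calc ya + (k : ℝ) * d + d ≤ m u ^ q + d := by linarith
          _ ≤ m v ^ q := by rw [hd]; exact hstep
      push_cast
      linarith
  have hfin := key N le_rfl
  have hNb : a + (N : ℝ) * h = b := by rw [hh]; field_simp; ring
  rw [hNb] at hfin
  have hNh : (N : ℝ) * h = b - a := by rw [hh]; field_simp
  have hND : (N : ℝ) * D = c * (b - a) / ((n : ℝ) + 1) := by
    rw [hD, ← hNh]; ring
  have hNd : (N : ℝ) * d = c * (b - a) / ((n : ℝ) + 1) * (ya / (ya + D)) ^ n := by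
    rw [hd, ← hND]; ring
  rw [hNd] at hfin
  linarith

private lemma stepLim (n : ℕ) (hn : 1 ≤ n) (m m' : ℝ → ℝ) (c T : ℝ) (hc : 0 < c)
    (hmono : MonotoneOn m (Ioi 0)) (hpos : ∀ r : ℝ, 0 < r → 0 < m r)
    (hAC : ∀ a b : ℝ, 0 < a → a ≤ b → m b - m a = ∫ r in a..b, m' r)
    (hderiv : ∀ᵐ r ∂(volume : Measure ℝ), r ∈ Ioo 0 T → HasDerivAt m (m' r) r)
    (hODE : ∀ᵐ r ∂(volume : Measure ℝ), r ∈ Ioo 0 T →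
      c * m r ^ ((n : ℝ) / ((n : ℝ) + 1)) ≤ m' r)
    (a b : ℝ) (ha : 0 < a) (hab : a < b) (hbT : b ≤ T) :
    m a ^ ((1 : ℝ) / ((n : ℝ) + 1)) + c * (b - a) / ((n : ℝ) + 1)
      ≤ m b ^ ((1 : ℝ) / ((n : ℝ) + 1)) := by
  have hn1 : (0 : ℝ) < (n : ℝ) + 1 := by positivity
  set q : ℝ := (1 : ℝ) / ((n : ℝ) + 1) with hq
  set ya : ℝ := m a ^ q with hya
  have hya0 : 0 < ya := Real.rpow_pos_of_pos (hpos a ha) q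
  set C : ℝ := c * (b - a) / ((n : ℝ) + 1) with hC
  have hC0 : 0 < C := by rw [hC]; exact div_pos (mul_pos hc (by linarith)) hn1
  have t1 : Tendsto (fun N : ℕ => c * ((b - a) / (N : ℝ)) / ((n : ℝ) + 1)) atTop (nhds 0) := by
    have he : (fun N : ℕ => c * ((b - a) / (N : ℝ)) / ((n : ℝ) + 1))
        = fun N : ℕ => (c * (b - a) / ((n : ℝ) + 1)) / (N : ℝ) := by
      funext N; ring
    rw [he]
    exact tendsto_const_div_atTop_nhds_zero_nat _
  have t2 : Tendsto (fun N : ℕ => ya + C * (ya / (ya + c * ((b - a) / (N : ℝ)) / ((n : ℝ) + 1))) ^ n)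
      atTop (nhds (ya + C)) := by
    have hden : Tendsto (fun N : ℕ => ya + c * ((b - a) / (N : ℝ)) / ((n : ℝ) + 1))
        atTop (nhds (ya + 0)) := tendsto_const_nhds.add t1
    have hfrac : Tendsto (fun N : ℕ => ya / (ya + c * ((b - a) / (N : ℝ)) / ((n : ℝ) + 1)))
        atTop (nhds (ya / (ya + 0))) :=
      tendsto_const_nhds.div hden (by simpa using hya0.ne')
    have hpow := (hfrac.pow n)
    have hval : (ya / (ya + 0)) ^ n = 1 := by
      rw [add_zero, div_self hya0.ne', one_pow]
    rw [hval] at hpow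
    have hfin : Tendsto
        (fun N : ℕ => ya + C * (ya / (ya + c * ((b - a) / (N : ℝ)) / ((n : ℝ) + 1))) ^ n)
        atTop (nhds (ya + C * 1)) := tendsto_const_nhds.add (hpow.const_mul C)
    simpa [mul_one] using hfin
  apply le_of_tendsto t2
  filter_upwards [eventually_ge_atTop 1] with N hN
  have := stepChain n hn m m' c T hc hmono hpos hAC hderiv hODE a b ha hab hbT N hN
  exact this

private lemma stepZero (n : ℕ) (hn : 1 ≤ n) (m m' : ℝ → ℝ) (c T : ℝ) (hc : 0 < c) (hT : 0 < T)
    (hmono : MonotoneOn m (Ioi 0)) (hpos : ∀ r : ℝ, 0 < r → 0 < m r)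
    (hAC : ∀ a b : ℝ, 0 < a → a ≤ b → m b - m a = ∫ r in a..b, m' r)
    (hderiv : ∀ᵐ r ∂(volume : Measure ℝ), r ∈ Ioo 0 T → HasDerivAt m (m' r) r)
    (hODE : ∀ᵐ r ∂(volume : Measure ℝ), r ∈ Ioo 0 T →
      c * m r ^ ((n : ℝ) / ((n : ℝ) + 1)) ≤ m' r) :
    c * T / ((n : ℝ) + 1) ≤ m T ^ ((1 : ℝ) / ((n : ℝ) + 1)) := by
  have hn1 : (0 : ℝ) < (n : ℝ) + 1 := by positivity
  have hseq : ∀ j : ℕ, c * (T - T / ((j : ℝ) + 2)) / ((n : ℝ) + 1)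
      ≤ m T ^ ((1 : ℝ) / ((n : ℝ) + 1)) := by
    intro j
    have hj2 : (0 : ℝ) < (j : ℝ) + 2 := by positivity
    have haj : 0 < T / ((j : ℝ) + 2) := div_pos hT hj2
    have hajT : T / ((j : ℝ) + 2) < T := div_lt_self hT (by linarith)
    have h := stepLim n hn m m' c T hc hmono hpos hAC hderiv hODE (T / ((j : ℝ) + 2)) T haj hajT
      le_rfl
    have h0 : 0 ≤ m (T / ((j : ℝ) + 2)) ^ ((1 : ℝ) / ((n : ℝ) + 1)) :=
      (Real.rpow_pos_of_pos (hpos _ haj) _).le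
    linarith
  have t0 : Tendsto (fun j : ℕ => T / ((j : ℝ) + 2)) atTop (nhds 0) := by
    apply Tendsto.div_atTop tendsto_const_nhds
    exact tendsto_atTop_add_const_right atTop 2 tendsto_natCast_atTop_atTop
  have t1 : Tendsto (fun j : ℕ => c * (T - T / ((j : ℝ) + 2)) / ((n : ℝ) + 1)) atTop
      (nhds (c * (T - 0) / ((n : ℝ) + 1))) := by
    have ts : Tendsto (fun j : ℕ => T - T / ((j : ℝ) + 2)) atTop (nhds (T - 0)) :=
      tendsto_const_nhds.sub t0
    exact (ts.const_mul c).div_const ((n : ℝ) + 1)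
  rw [sub_zero] at t1
  exact le_of_tendsto t1 (Eventually.of_forall hseq)

private lemma npow_rpow_q (n : ℕ) (x : ℝ) (hx : 0 ≤ x) :
    ((x ^ (n + 1) : ℝ)) ^ ((1 : ℝ) / ((n : ℝ) + 1)) = x := by
  rw [← Real.rpow_natCast x (n + 1), ← Real.rpow_mul hx]
  have h : ((n + 1 : ℕ) : ℝ) * ((1 : ℝ) / ((n : ℝ) + 1)) = 1 := by
    push_cast
    field_simp
  rw [h, Real.rpow_one]

/-- Core ODE argument in the nucleation lemma: a nondecreasing, locally absolutely
continuous function `m` on `(0,∞)`, positive, with `m τ ≤ (τ/(2α))^(n+1)` and satisfying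
`m' + (α/τ) m ≥ m^(n/(n+1))` a.e. on `(0,τ)`, must satisfy `m' ≥ (1/2) m^(n/(n+1))` a.e.
and hence `m τ ≥ (τ/(2(n+1)))^(n+1)`, a contradiction: no such function exists. -/
theorem stmt0 (n : ℕ) (hn : 1 ≤ n) (α τ : ℝ) (hα : (n : ℝ) + 1 ≤ α) (hτ : 0 < τ)
    (m m' : ℝ → ℝ)
    (hmono : MonotoneOn m (Ioi 0))
    (hpos : ∀ r : ℝ, 0 < r → 0 < m r)
    (hAC : ∀ a b : ℝ, 0 < a → a ≤ b → m b - m a = ∫ r in a..b, m' r)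
    (hderiv : ∀ᵐ r ∂(volume : Measure ℝ), r ∈ Ioo 0 τ → HasDerivAt m (m' r) r)
    (hmτ : m τ ≤ (τ / (2 * α)) ^ (n + 1))
    (hODE : ∀ᵐ r ∂(volume : Measure ℝ), r ∈ Ioo 0 τ →
      m r ^ ((n : ℝ) / ((n : ℝ) + 1)) ≤ m' r + (α / τ) * m r) :
    (∀ᵐ r ∂(volume : Measure ℝ), r ∈ Ioo 0 τ →
      (1 / 2) * m r ^ ((n : ℝ) / ((n : ℝ) + 1)) ≤ m' r) ∧
    ((τ / (2 * ((n : ℝ) + 1))) ^ (n + 1) ≤ m τ) ∧ False := by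
  have hn1 : (0 : ℝ) < (n : ℝ) + 1 := by positivity
  have hα0 : (0 : ℝ) < α := lt_of_lt_of_le hn1 hα
  have h2α : (0 : ℝ) < 2 * α := by linarith
  set q : ℝ := (1 : ℝ) / ((n : ℝ) + 1) with hq
  set p : ℝ := (n : ℝ) / ((n : ℝ) + 1) with hp
  -- bound on m τ ^ q
  have hyτ : m τ ^ q ≤ τ / (2 * α) := by
    have h1 : m τ ^ q ≤ ((τ / (2 * α)) ^ (n + 1) : ℝ) ^ q :=
      Real.rpow_le_rpow (hpos τ hτ).le hmτ (by positivity)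
    rwa [hq, npow_rpow_q n (τ / (2 * α)) (by positivity)] at h1
  -- key pointwise bound on (0, τ)
  have key0 : ∀ r ∈ Ioo (0 : ℝ) τ, (α / τ) * m r ≤ (1 / 2) * m r ^ p := by
    intro r hr
    have hmr : 0 < m r := hpos r hr.1
    have hmrp : (0 : ℝ) ≤ m r ^ p := (Real.rpow_pos_of_pos hmr p).le
    have hyr : m r ^ q ≤ τ / (2 * α) := by
      refine le_trans ?_ hyτ
      exact Real.rpow_le_rpow hmr.le
        (hmono (mem_Ioi.2 hr.1) (mem_Ioi.2 hτ) hr.2.le) (by positivity)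
    have hcoef : (α / τ) * (m r ^ q) ≤ 1 / 2 := by
      calc (α / τ) * (m r ^ q) ≤ (α / τ) * (τ / (2 * α)) :=
            mul_le_mul_of_nonneg_left hyr (by positivity)
        _ = 1 / 2 := by field_simp
    have hsplit : m r = m r ^ q * m r ^ p := rpow_split n (m r) hmr
    have e : (α / τ) * m r = (α / τ) * (m r ^ q) * m r ^ p := by
      conv_lhs => rw [hsplit]
      ring
    rw [e]
    exact mul_le_mul_of_nonneg_right hcoef hmrp
  -- conclusion 1
  have concl1 : ∀ᵐ r ∂(volume : Measure ℝ), r ∈ Ioo 0 τ → (1 / 2) * m r ^ p ≤ m' r := by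
    filter_upwards [hODE] with r h hr
    have h1 := h hr
    have h2 := key0 r hr
    linarith
  refine ⟨concl1, ?_, ?_⟩
  · -- conclusion 2
    have hz := stepZero n hn m m' (1 / 2) τ (by norm_num) hτ hmono hpos hAC hderiv concl1
    have hbase : τ / (2 * ((n : ℝ) + 1)) ≤ m τ ^ q := by
      have e : τ / (2 * ((n : ℝ) + 1)) = 1 / 2 * τ / ((n : ℝ) + 1) := by
        rw [div_eq_div_iff (by positivity : (2*((n:ℝ)+1)) ≠ 0) (by positivity : ((n:ℝ)+1) ≠ 0)]
        ring
      rw [e]; exact hz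
    have := pow_le_pow_left₀ (by positivity) hbase (n + 1)
    rwa [rpow_q_npow n (m τ) (hpos τ hτ)] at this
  · -- the contradiction
    have hτ2 : (0 : ℝ) < τ / 2 := by linarith
    have hlim := stepLim n hn m m' (1 / 2) τ (by norm_num) hmono hpos hAC hderiv concl1
      (τ / 2) τ hτ2 (by linarith) le_rfl
    set yhalf : ℝ := m (τ / 2) ^ q with hyhalf
    have hyh0 : 0 < yhalf := Real.rpow_pos_of_pos (hpos _ hτ2) q
    have hyhub : yhalf ≤ τ / (2 * α) - 1 / 2 * (τ - τ / 2) / ((n : ℝ) + 1) := by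
      linarith [hlim, hyτ]
    -- improved ODE bound on (0, τ/2)
    have himp : ∀ᵐ r ∂(volume : Measure ℝ), r ∈ Ioo 0 (τ / 2) →
        (3 / 4) * m r ^ p ≤ m' r := by
      filter_upwards [hODE] with r h hr
      have hrτ : r ∈ Ioo (0 : ℝ) τ := ⟨hr.1, by linarith [hr.2]⟩
      have h1 := h hrτ
      have hmr : 0 < m r := hpos r hr.1
      have hmrp : (0 : ℝ) ≤ m r ^ p := (Real.rpow_pos_of_pos hmr p).le
      have hyr : m r ^ q ≤ yhalf :=
        Real.rpow_le_rpow hmr.le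
          (hmono (mem_Ioi.2 hr.1) (mem_Ioi.2 hτ2) hr.2.le) (by positivity)
      have e1 : (α / τ) * (τ / (2 * α)) = 1 / 2 := by field_simp
      have e2 : (α / τ) * (1 / 2 * (τ - τ / 2) / ((n : ℝ) + 1)) = α / (4 * ((n : ℝ) + 1)) := by
        field_simp
        ring
      have e3 : (1 : ℝ) / 4 ≤ α / (4 * ((n : ℝ) + 1)) := by
        rw [le_div_iff₀ (by positivity)]
        linarith
      have hcoef : (α / τ) * (m r ^ q) ≤ 1 / 4 := by
        have hh1 : (α / τ) * (m r ^ q) ≤ (α / τ) * yhalf :=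
          mul_le_mul_of_nonneg_left hyr (by positivity)
        have hh2 : (α / τ) * yhalf ≤
            (α / τ) * (τ / (2 * α) - 1 / 2 * (τ - τ / 2) / ((n : ℝ) + 1)) :=
          mul_le_mul_of_nonneg_left hyhub (by positivity)
        rw [mul_sub, e1, e2] at hh2
        linarith
      have hsplit : m r = m r ^ q * m r ^ p := rpow_split n (m r) hmr
      have e : (α / τ) * m r = (α / τ) * (m r ^ q) * m r ^ p := by
        conv_lhs => rw [hsplit]
        ring
      have hb : (α / τ) * m r ≤ (1 / 4) * m r ^ p := by
        rw [e]
        exact mul_le_mul_of_nonneg_right hcoef hmrp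
      linarith
    have hderiv2 : ∀ᵐ r ∂(volume : Measure ℝ), r ∈ Ioo 0 (τ / 2) → HasDerivAt m (m' r) r :=
      hderiv.mono fun r h hr => h ⟨hr.1, by linarith [hr.2]⟩
    have hz2 := stepZero n hn m m' (3 / 4) (τ / 2) (by norm_num) hτ2 hmono hpos hAC hderiv2 himp
    -- derive False
    have f2 : τ / (2 * α) ≤ τ / (2 * ((n : ℝ) + 1)) :=
      div_le_div_of_nonneg_left hτ.le (by positivity) (by linarith)
    have X0 : (0 : ℝ) < τ / ((n : ℝ) + 1) := by positivity
    have g1 : 1 / 2 * (τ - τ / 2) / ((n : ℝ) + 1) = (1 / 4) * (τ / ((n : ℝ) + 1)) := by ring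
    have g2 : τ / (2 * ((n : ℝ) + 1)) = (1 / 2) * (τ / ((n : ℝ) + 1)) := by
      rw [eq_comm, mul_div_assoc', div_eq_div_iff (by positivity : ((n:ℝ)+1) ≠ 0)
        (by positivity : (2*((n:ℝ)+1)) ≠ 0)]
      ring
    have g3 : 3 / 4 * (τ / 2) / ((n : ℝ) + 1) = (3 / 8) * (τ / ((n : ℝ) + 1)) := by ring
    rw [g1] at hyhub
    rw [g3] at hz2
    rw [g2] at f2
    linarith
end

section
/- Let f : (0,∞) → [0,∞) be a nondecreasing function, let n ≥ 2 and C > 0, and suppose that f(r) > 0 for all r > 0 and f(r) ≤ C·f'(r)^(n/(n-1)) for almost every r ∈ (0,r₀), where f' denotes the classical derivative (which exists a.e. since f is monotone) and the distributional derivative of f dominates f'·dr. Then there exists a constant θ₀ > 0 depending only on n and C such that f(r) ≥ θ₀·rⁿ for every r ∈ (0,r₀). -/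
/-!
Writing `p = n/(n-1)`, the inequality `f ≤ C f'^p` says `(f^(1/n))' ≥ n⁻¹ C^(-1/p)` almost
everywhere. Since `f^(1/n)` is monotone, Lebesgue's inequality `∫ₐᵇ g' ≤ g b - g a` for monotone `g`
turns this into linear growth `f(r)^(1/n) ≥ n⁻¹ C^(-1/p) r`, and raising to the `n`-th power gives
the density bound with `θ₀ = (n⁻¹ C^(-1/p))ⁿ`.
-/

open MeasureTheory Set Filter Topology

/-- At a point where `f > 0`, the bound `f ≤ C f'^p` forces `deriv f x ≠ 0`, so `f` is genuinely
differentiable at `x` and the chain rule applies. -/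
theorem le_deriv_rpow_of_le_mul_deriv_rpow {f : ℝ → ℝ} {x C p : ℝ} (hC : 0 < C) (hp : 1 ≤ p)
    (hfx : 0 < f x) (hf' : 0 ≤ deriv f x) (h : f x ≤ C * deriv f x ^ p) :
    (1 - p⁻¹) * C ^ (-p⁻¹) ≤ deriv (fun y => f y ^ (1 - p⁻¹)) x := by
  have hp0 : p ≠ 0 := by positivity
  have hdiff : DifferentiableAt ℝ f x := by
    by_contra hnd
    rw [deriv_zero_of_not_differentiableAt hnd, Real.zero_rpow hp0, mul_zero] at h
    linarith
  have hlow : (f x / C) ^ p⁻¹ ≤ deriv f x := by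
    calc (f x / C) ^ p⁻¹ ≤ (deriv f x ^ p) ^ p⁻¹ := by
          gcongr
          rwa [div_le_iff₀' hC]
      _ = deriv f x := Real.rpow_rpow_inv hf' hp0
  have hσ : 0 ≤ 1 - p⁻¹ := sub_nonneg.mpr (inv_le_one_of_one_le₀ hp)
  rw [deriv_rpow_const hdiff (Or.inl hfx.ne'), sub_sub_cancel_left]
  calc (1 - p⁻¹) * C ^ (-p⁻¹) = (f x / C) ^ p⁻¹ * (1 - p⁻¹) * f x ^ (-p⁻¹) := by
        rw [Real.div_rpow hfx.le hC.le, Real.rpow_neg hfx.le, Real.rpow_neg hC.le]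
        field_simp
    _ ≤ deriv f x * (1 - p⁻¹) * f x ^ (-p⁻¹) := by gcongr

theorem MonotoneOn.mul_sub_le_sub_of_le_deriv {g : ℝ → ℝ} {a b K : ℝ} (hab : a ≤ b)
    (hg : MonotoneOn g (Icc a b)) (hK : ∀ᵐ x, x ∈ Ioo a b → K ≤ deriv g x) :
    K * (b - a) ≤ g b - g a := by
  rw [← uIcc_of_le hab] at hg
  have hgab : 0 ≤ g b - g a := sub_nonneg.mpr (hg left_mem_uIcc right_mem_uIcc hab)
  calc K * (b - a) = ∫ _ in a..b, K := by simp [mul_comm]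
    _ ≤ ∫ x in a..b, deriv g x :=
        intervalIntegral.integral_mono_ae_restrict hab intervalIntegrable_const
          hg.intervalIntegrable_deriv <| by
            rwa [EventuallyLE, ← restrict_Ioo_eq_restrict_Icc, ae_restrict_iff' measurableSet_Ioo]
    _ ≤ g b - g a := by
        have := hg.intervalIntegral_deriv_mem_uIcc
        rw [uIcc_of_le hgab] at this
        exact this.2

theorem MonotoneOn.mul_le_of_le_deriv {g : ℝ → ℝ} {r K : ℝ} (hr : 0 < r)
    (hg : MonotoneOn g (Ioc 0 r)) (hg0 : ∀ x ∈ Ioc 0 r, 0 ≤ g x)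
    (hK : ∀ᵐ x, x ∈ Ioo 0 r → K ≤ deriv g x) : K * r ≤ g r := by
  have hgrowth : ∀ a ∈ Ioo 0 r, K * (r - a) ≤ g r := fun a ha => by
    have hsub : Icc a r ⊆ Ioc 0 r := Icc_subset_Ioc ha.1 le_rfl
    have := (hg.mono hsub).mul_sub_le_sub_of_le_deriv ha.2.le <| by
      filter_upwards [hK] with x hx hxa using hx ⟨ha.1.trans hxa.1, hxa.2⟩
    linarith [hg0 a (hsub (left_mem_Icc.mpr ha.2.le))]
  have hlim : Tendsto (fun a => K * (r - a)) (𝓝[>] 0) (𝓝 (K * r)) := by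
    have : Continuous fun a : ℝ => K * (r - a) := by fun_prop
    simpa using (this.tendsto 0).mono_left nhdsWithin_le_nhds
  exact le_of_tendsto hlim <| eventually_of_mem (Ioo_mem_nhdsGT hr) hgrowth

theorem stmt1_general (n : ℕ) (hn : 2 ≤ n) (C r₀ : ℝ) (hC : 0 < C) :
    ∃ θ₀ : ℝ, 0 < θ₀ ∧ ∀ f : ℝ → ℝ,
      MonotoneOn f (Ioi 0) →
      (∀ r : ℝ, 0 < r → 0 < f r) →
      (∀ a b : ℝ, 0 < a → a ≤ b → b < r₀ → ∫ r in a..b, deriv f r ≤ f b - f a) →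
      (∀ᵐ r ∂(volume : Measure ℝ), r ∈ Ioo 0 r₀ →
        f r ≤ C * deriv f r ^ ((n : ℝ) / ((n : ℝ) - 1))) →
      ∀ r ∈ Ioo 0 r₀, θ₀ * r ^ n ≤ f r := by
  have hn1 : (1 : ℝ) < n := by exact_mod_cast hn
  have hp : 1 ≤ (n : ℝ) / (n - 1) := by rw [le_div_iff₀ (by linarith)]; linarith
  have hσ : 1 - ((n : ℝ) / (n - 1))⁻¹ = (n : ℝ)⁻¹ := by field_simp; ring
  set K := (n : ℝ)⁻¹ * C ^ (-((n : ℝ) / (n - 1))⁻¹)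
  have hK : 0 < K := by positivity
  refine ⟨K ^ n, pow_pos hK n, fun f hmono hpos _ hineq r hr => ?_⟩
  set g := fun x => f x ^ (n : ℝ)⁻¹
  have hderiv : ∀ᵐ x, x ∈ Ioo 0 r → K ≤ deriv g x := by
    filter_upwards [hineq] with x hx hxr
    have hf' : 0 ≤ deriv f x :=
      hmono.derivWithin_nonneg.trans_eq (derivWithin_of_isOpen isOpen_Ioi hxr.1)
    have := le_deriv_rpow_of_le_mul_deriv_rpow hC hp (hpos x hxr.1) hf'
      (hx ⟨hxr.1, hxr.2.trans hr.2⟩)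
    rwa [hσ] at this
  have hgmono : MonotoneOn g (Ioc 0 r) := fun x hx y hy hxy =>
    Real.rpow_le_rpow (hpos x hx.1).le (hmono hx.1 hy.1 hxy) (by positivity)
  have hlinear : K * r ≤ g r :=
    hgmono.mul_le_of_le_deriv hr.1 (fun x hx => Real.rpow_nonneg (hpos x hx.1).le _) hderiv
  calc K ^ n * r ^ n = (K * r) ^ n := (mul_pow _ _ _).symm
    _ ≤ g r ^ n := pow_le_pow_left₀ (mul_pos hK hr.1).le hlinear n
    _ = f r := Real.rpow_inv_natCast_pow (hpos r hr.1).le (by omega)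

/-- Density lower-bound argument: if a nondecreasing positive function `f` satisfies
`f(r) ≤ C f'(r)^(n/(n-1))` a.e. on `(0,r₀)` (with the distributional derivative of `f`
dominating `f'·dr`), then `f(r) ≥ θ₀ rⁿ` on `(0,r₀)` for a constant `θ₀ > 0` depending
only on `n` and `C`. -/
theorem stmt1 (n : ℕ) (hn : 2 ≤ n) (C r₀ : ℝ) (hC : 0 < C) (hr₀ : 0 < r₀) :
    ∃ θ₀ : ℝ, 0 < θ₀ ∧ ∀ f : ℝ → ℝ,
      MonotoneOn f (Ioi 0) →
      (∀ r : ℝ, 0 < r → 0 < f r) →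
      (∀ a b : ℝ, 0 < a → a ≤ b → b < r₀ → ∫ r in a..b, deriv f r ≤ f b - f a) →
      (∀ᵐ r ∂(volume : Measure ℝ), r ∈ Ioo 0 r₀ →
        f r ≤ C * deriv f r ^ ((n : ℝ) / ((n : ℝ) - 1))) →
      ∀ r ∈ Ioo 0 r₀, θ₀ * r ^ n ≤ f r :=
  stmt1_general n hn C r₀ hC
end

section
/- Let f : (0,r₀) → [0,∞) be nondecreasing with distributional derivative Df ≥ f'(r)·dr, and suppose that for some constants C* > 0 and θ₀ > 0 one has f(r) ≤ (r/n)·f'(r) + C*·r^(n+1) and f(r) ≥ θ₀·ωₙ·rⁿ for almost every r ∈ (0,r₀). Then, setting Λ = n·C*/(θ₀·ωₙ), the function r ↦ e^(Λr)·f(r)/rⁿ is nondecreasing on (0,r₀). -/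
open MeasureTheory Set Filter Topology

/-- `ωₙ`, the volume of the unit ball in `ℝⁿ`. -/
noncomputable def unitBallVol (n : ℕ) : ℝ :=
  (MeasureTheory.volume (Metric.ball (0 : EuclideanSpace ℝ (Fin n)) 1)).toReal


lemma triangle_swap {a b : ℝ} (hab : a ≤ b) {D w w' : ℝ → ℝ}
    (hDm : Measurable D) (hD : IntegrableOn D (Ioc a b))
    (hw'm : Measurable w')
    (hw : ∀ x ∈ Icc a b, HasDerivAt w (w' x) x)
    {C : ℝ} (hC : ∀ x ∈ Icc a b, |w' x| ≤ C) :
    ∫ x in Ioc a b, w' x * (∫ t in Ioc a x, D t) = ∫ t in Ioc a b, (w b - w t) * D t := by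
  have hC0 : 0 ≤ C := le_trans (abs_nonneg _) (hC a ⟨le_refl a, hab⟩)
  set F : ℝ → ℝ → ℝ := fun x t => if a < t ∧ t ≤ x ∧ x ≤ b then w' x * D t else 0 with hF
  have Fpos : ∀ x t, a < t → t ≤ x → x ≤ b → F x t = w' x * D t := by
    intro x t h1 h2 h3; simp only [hF]; rw [if_pos ⟨h1, h2, h3⟩]
  have Fneg : ∀ x t, ¬(a < t ∧ t ≤ x ∧ x ≤ b) → F x t = 0 := by
    intro x t h; simp only [hF]; rw [if_neg h]
  have hsetm : MeasurableSet {p : ℝ × ℝ | a < p.2 ∧ p.2 ≤ p.1 ∧ p.1 ≤ b} :=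
    (measurableSet_lt measurable_const measurable_snd).inter
      ((measurableSet_le measurable_snd measurable_fst).inter
        (measurableSet_le measurable_fst measurable_const))
  have hFm : Measurable (fun p : ℝ × ℝ => F p.1 p.2) := by
    have : (fun p : ℝ × ℝ => F p.1 p.2) =
        fun p : ℝ × ℝ => if p ∈ {q : ℝ × ℝ | a < q.2 ∧ q.2 ≤ q.1 ∧ q.1 ≤ b}
          then w' p.1 * D p.2 else 0 := rfl
    rw [this]
    exact Measurable.ite hsetm ((hw'm.comp measurable_fst).mul (hDm.comp measurable_snd))
      measurable_const
  have hw'i : ∀ t ∈ Icc a b, IntervalIntegrable w' volume t b := by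
    intro t ht
    rw [intervalIntegrable_iff_integrableOn_Ioc_of_le ht.2]
    refine Measure.integrableOn_of_bounded (M := C) (measure_Ioc_lt_top).ne
      hw'm.aestronglyMeasurable ?_
    filter_upwards [ae_restrict_mem measurableSet_Ioc] with x hx
    rw [Real.norm_eq_abs]
    exact hC x ⟨le_trans ht.1 hx.1.le, hx.2⟩
  have hFi : Integrable (Function.uncurry F)
      ((volume.restrict (Ioc a b)).prod (volume.restrict (Ioc a b))) := by
    refine Integrable.mono' ((integrable_const C).mul_prod hD.norm)
      hFm.aestronglyMeasurable ?_
    filter_upwards with p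
    have huc : Function.uncurry F p = F p.1 p.2 := rfl
    by_cases hcond : a < p.2 ∧ p.2 ≤ p.1 ∧ p.1 ≤ b
    · have hp1 : p.1 ∈ Icc a b := ⟨le_of_lt (lt_of_lt_of_le hcond.1 hcond.2.1), hcond.2.2⟩
      rw [huc, Fpos _ _ hcond.1 hcond.2.1 hcond.2.2, Real.norm_eq_abs, abs_mul,
        Real.norm_eq_abs]
      exact mul_le_mul_of_nonneg_right (hC _ hp1) (abs_nonneg _)
    · rw [huc, Fneg _ _ hcond, norm_zero]
      exact mul_nonneg hC0 (norm_nonneg _)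
  calc ∫ x in Ioc a b, w' x * (∫ t in Ioc a x, D t)
      = ∫ x in Ioc a b, ∫ t in Ioc a b, F x t := by
        refine setIntegral_congr_fun measurableSet_Ioc (fun x hx => ?_)
        have h1 : ∀ t ∈ Ioc a b, F x t = (Ioc a x).indicator D t * w' x := by
          intro t _
          by_cases h : t ∈ Ioc a x
          · rw [indicator_of_mem h, Fpos _ _ h.1 h.2 hx.2, mul_comm]
          · rw [indicator_of_notMem h, zero_mul]
            refine Fneg _ _ ?_
            simp only [mem_Ioc, not_and_or, not_le, not_lt] at h
            rcases h with h | h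
            · rintro ⟨h1', _, _⟩; exact absurd h1' (not_lt.2 h)
            · rintro ⟨_, h2', _⟩; exact absurd h2' (not_le.2 h)
        rw [setIntegral_congr_fun measurableSet_Ioc h1, integral_mul_const,
          integral_indicator measurableSet_Ioc, Measure.restrict_restrict measurableSet_Ioc,
          inter_eq_self_of_subset_left (Ioc_subset_Ioc_right hx.2), mul_comm]
    _ = ∫ t in Ioc a b, ∫ x in Ioc a b, F x t := integral_integral_swap hFi
    _ = ∫ t in Ioc a b, (w b - w t) * D t := by
        refine setIntegral_congr_fun measurableSet_Ioc (fun t ht => ?_)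
        have h1 : ∀ x ∈ Ioc a b, F x t = (Icc t b).indicator w' x * D t := by
          intro x _
          by_cases h : x ∈ Icc t b
          · rw [indicator_of_mem h, Fpos _ _ ht.1 h.1 h.2]
          · rw [indicator_of_notMem h, zero_mul]
            refine Fneg _ _ ?_
            simp only [mem_Icc, not_and_or, not_le] at h
            rcases h with h | h
            · rintro ⟨_, h2', _⟩; exact absurd h2' (not_le.2 h)
            · rintro ⟨_, _, h3'⟩; exact absurd h3' (not_le.2 h)
        rw [setIntegral_congr_fun measurableSet_Ioc h1, integral_mul_const,
          integral_indicator measurableSet_Icc, Measure.restrict_restrict measurableSet_Icc,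
          inter_eq_self_of_subset_left
            (show Icc t b ⊆ Ioc a b from fun x hx => ⟨lt_of_lt_of_le ht.1 hx.1, hx.2⟩),
          integral_Icc_eq_integral_Ioc, ← intervalIntegral.integral_of_le ht.2,
          intervalIntegral.integral_eq_sub_of_hasDerivAt
            (fun x hx => hw x ⟨le_trans ht.1.le (by rw [uIcc_of_le ht.2] at hx; exact hx.1),
              by rw [uIcc_of_le ht.2] at hx; exact hx.2⟩)
            (hw'i t ⟨ht.1.le, ht.2⟩)]


lemma deriv_nonneg_of_monotoneOn {f : ℝ → ℝ} {r₀ : ℝ} (hmono : MonotoneOn f (Ioo 0 r₀))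
    {x : ℝ} (hx : x ∈ Ioo 0 r₀) : 0 ≤ deriv f x := by
  by_cases hdiff : DifferentiableAt ℝ f x
  · have hd := hdiff.hasDerivAt
    rw [hasDerivAt_iff_tendsto_slope] at hd
    refine ge_of_tendsto hd ?_
    have hnb : Ioo 0 r₀ ∈ 𝓝[≠] x := nhdsWithin_le_nhds (isOpen_Ioo.mem_nhds hx)
    filter_upwards [hnb, self_mem_nhdsWithin] with y hy hyx
    have hyx' : y ≠ x := hyx
    rw [slope_def_field]
    rcases lt_or_gt_of_ne hyx' with h | h
    · have h1 : f y - f x ≤ 0 := sub_nonpos.2 (hmono hy hx h.le)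
      have h2 : y - x < 0 := sub_neg.2 h
      exact div_nonneg_of_nonpos h1 h2.le
    · have h1 : 0 ≤ f y - f x := sub_nonneg.2 (hmono hx hy h.le)
      have h2 : 0 ≤ y - x := by linarith
      exact div_nonneg h1 h2
  · rw [deriv_zero_of_not_differentiableAt hdiff]

lemma deriv_integrableOn_of_monotoneOn {f : ℝ → ℝ} {r₀ a b : ℝ}
    (hmono : MonotoneOn f (Ioo 0 r₀)) (h0 : 0 < a) (hab : a ≤ b) (hbr : b < r₀) :
    IntegrableOn (deriv f) (Ioc a b) := by
  set a' := a / 2 with ha'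
  set b' := (b + r₀) / 2 with hb'
  have ha'0 : 0 < a' := by positivity
  have ha'a : a' < a := by rw [ha']; linarith
  have hbb' : b < b' := by rw [hb']; linarith
  have hb'r : b' < r₀ := by rw [hb']; linarith
  have ha'mem : a' ∈ Ioo 0 r₀ := ⟨ha'0, by linarith⟩
  have hb'mem : b' ∈ Ioo 0 r₀ := ⟨by linarith, hb'r⟩
  obtain ⟨g, hg, gf⟩ : ∃ g : ℝ → ℝ, Monotone g ∧ EqOn f g (Ioo 0 r₀ ∩ Icc a' b') :=
    (hmono.mono inter_subset_left).exists_monotone_extension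
      (hmono.map_bddBelow inter_subset_left ⟨a', fun x hx => hx.2.1, ha'mem⟩)
      (hmono.map_bddAbove inter_subset_left ⟨b', fun x hx => hx.2.2, hb'mem⟩)
  have hsub : Ioo a' b' ⊆ Ioo 0 r₀ ∩ Icc a' b' := fun y hy =>
    ⟨⟨lt_trans ha'0 hy.1, lt_trans hy.2 hb'r⟩, hy.1.le, hy.2.le⟩
  have hderiv_eq : ∀ x ∈ Ioc a b, deriv f x = deriv g x := by
    intro x hx
    have hxm : x ∈ Ioo a' b' := ⟨lt_trans ha'a hx.1, lt_of_le_of_lt hx.2 hbb'⟩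
    have : f =ᶠ[nhds x] g :=
      Filter.eventuallyEq_of_mem (isOpen_Ioo.mem_nhds hxm) (fun y hy => gf (hsub hy))
    exact this.deriv_eq
  have hae : ∀ᵐ x, HasDerivAt g ((Measure.rnDeriv hg.stieltjesFunction.measure volume x).toReal) x :=
    hg.ae_hasDerivAt
  have hderivg : deriv g =ᵐ[volume]
      fun x => (Measure.rnDeriv hg.stieltjesFunction.measure volume x).toReal := by
    filter_upwards [hae] with x hx using hx.deriv
  have hint : IntegrableOn
      (fun x => (Measure.rnDeriv hg.stieltjesFunction.measure volume x).toReal) (Ioc a b) := by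
    apply integrable_toReal_of_lintegral_ne_top
      (Measure.measurable_rnDeriv _ _).aemeasurable
    refine ne_of_lt (lt_of_le_of_lt (Measure.setLIntegral_rnDeriv_le _) ?_)
    rw [hg.stieltjesFunction.measure_Ioc]
    exact ENNReal.ofReal_lt_top
  have hintg : IntegrableOn (deriv g) (Ioc a b) :=
    hint.congr (ae_restrict_of_ae hderivg.symm)
  exact hintg.congr (by
    filter_upwards [ae_restrict_mem measurableSet_Ioc] with x hx
    exact (hderiv_eq x hx).symm)

/-- Almost-monotonicity: if a nondecreasing `f` satisfies `f(r) ≤ (r/n) f'(r) + C* r^(n+1)`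
and `f(r) ≥ θ₀ ωₙ rⁿ` a.e. on `(0,r₀)`, with `Df ≥ f'·dr`, then, for
`Λ = n C*/(θ₀ ωₙ)`, the function `r ↦ e^(Λr) f(r)/rⁿ` is nondecreasing on `(0,r₀)`. -/
theorem stmt2 (n : ℕ) (hn : 1 ≤ n) (r₀ Cs θ₀ : ℝ) (hr₀ : 0 < r₀) (hC : 0 < Cs)
    (hθ : 0 < θ₀) (f : ℝ → ℝ)
    (hmono : MonotoneOn f (Ioo 0 r₀)) (hnn : ∀ r ∈ Ioo 0 r₀, 0 ≤ f r)
    (hDf : ∀ a b : ℝ, 0 < a → a ≤ b → b < r₀ → ∫ r in a..b, deriv f r ≤ f b - f a)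
    (hcone : ∀ᵐ r ∂(volume : Measure ℝ), r ∈ Ioo 0 r₀ →
      f r ≤ (r / n) * deriv f r + Cs * r ^ (n + 1))
    (hdens : ∀ᵐ r ∂(volume : Measure ℝ), r ∈ Ioo 0 r₀ →
      θ₀ * unitBallVol n * r ^ n ≤ f r) :
    MonotoneOn (fun r : ℝ =>
      Real.exp ((n * Cs / (θ₀ * unitBallVol n)) * r) * f r / r ^ n) (Ioo 0 r₀) := by
  have hω : 0 < unitBallVol n := by
    have h1 : (0:ENNReal) < volume (Metric.ball (0 : EuclideanSpace ℝ (Fin n)) 1) :=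
      Metric.measure_ball_pos _ _ one_pos
    have h2 : volume (Metric.ball (0 : EuclideanSpace ℝ (Fin n)) 1) < ⊤ :=
      measure_ball_lt_top
    exact ENNReal.toReal_pos h1.ne' h2.ne
  set ω := unitBallVol n with hωdef
  set N : ℝ := (n : ℝ) with hNdef
  have hN : (0:ℝ) < N := by
    simp only [hNdef]
    exact_mod_cast Nat.lt_of_lt_of_le Nat.zero_lt_one hn
  set Λ : ℝ := N * Cs / (θ₀ * ω) with hΛdef
  have hΛ : 0 < Λ := by
    apply div_pos (mul_pos hN hC) (mul_pos hθ hω)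
  -- a.e. differential inequality
  have hkey : ∀ᵐ r ∂(volume : Measure ℝ), r ∈ Ioo 0 r₀ →
      (N / r - Λ) * f r ≤ deriv f r := by
    filter_upwards [hcone, hdens] with r h1 h2 hr
    have hrpos : 0 < r := hr.1
    have h1' := h1 hr
    have h2' := h2 hr
    have hP : (0:ℝ) < r ^ n := pow_pos hrpos n
    have e1 : (N / r) * f r ≤ deriv f r + (N * Cs) * r ^ n := by
      have hstep := mul_le_mul_of_nonneg_left h1' (le_of_lt (div_pos hN hrpos))
      calc (N / r) * f r ≤ (N / r) * ((r / N) * deriv f r + Cs * r ^ (n + 1)) := hstep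
        _ = deriv f r + (N * Cs) * r ^ n := by
            rw [pow_succ]
            field_simp
    have e2 : (N * Cs) * r ^ n ≤ Λ * f r := by
      have hΛω : Λ * (θ₀ * ω) = N * Cs := by
        rw [hΛdef]
        field_simp
      calc (N * Cs) * r ^ n = Λ * (θ₀ * ω * r ^ n) := by rw [← hΛω]; ring
        _ ≤ Λ * f r := mul_le_mul_of_nonneg_left h2' hΛ.le
    rw [sub_mul]
    linarith
  -- the weight and its derivative
  set w : ℝ → ℝ := fun x => Real.exp (Λ * x) / x ^ n with hwdef
  set w' : ℝ → ℝ := fun x => (Λ - N / x) * w x with hw'def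
  have hwpos : ∀ x : ℝ, 0 < x → 0 < w x := fun x hx =>
    div_pos (Real.exp_pos _) (pow_pos hx n)
  have hwderiv : ∀ x : ℝ, 0 < x → HasDerivAt w (w' x) x := by
    intro x hx
    obtain ⟨m, hm⟩ : ∃ m, n = m + 1 := ⟨n - 1, (Nat.succ_pred_eq_of_pos hn).symm⟩
    have hxne : x ≠ 0 := hx.ne'
    have hexp : HasDerivAt (fun y => Real.exp (Λ * y)) (Real.exp (Λ * x) * Λ) x := by
      simpa using ((hasDerivAt_id x).const_mul Λ).exp
    have hpow : HasDerivAt (fun y : ℝ => y ^ n) ((n : ℝ) * x ^ (n - 1)) x := by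
      simpa using hasDerivAt_pow n x
    have hne : x ^ n ≠ 0 := pow_ne_zero _ hxne
    have := hexp.div hpow hne
    refine HasDerivAt.congr_deriv this ?_
    subst hm
    simp only [hw'def, hwdef, hNdef]
    push_cast
    field_simp
    ring
  have hw'm : Measurable w' := by
    apply Measurable.mul
    · exact (measurable_const.sub (measurable_const.div measurable_id))
    · apply Measurable.div
      · exact (Real.continuous_exp.comp (continuous_const.mul continuous_id)).measurable
      · exact (measurable_id.pow_const n)
  have hDm : Measurable (deriv f) := measurable_deriv f
  -- main step
  rintro a ⟨ha0, har⟩ b ⟨hb0, hbr⟩ hab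
  simp only
  have hb0' : 0 < b := hb0
  set D := deriv f with hDdef
  have hD : IntegrableOn D (Ioc a b) := deriv_integrableOn_of_monotoneOn hmono ha0 hab hbr
  have hDIcc : IntegrableOn D (Icc a b) := by
    rwa [integrableOn_Icc_iff_integrableOn_Ioc]
  have hDnn : ∀ x ∈ Icc a b, 0 ≤ D x := fun x hx =>
    deriv_nonneg_of_monotoneOn hmono ⟨lt_of_lt_of_le ha0 hx.1, lt_of_le_of_lt hx.2 hbr⟩
  -- u, the primitive
  set u : ℝ → ℝ := fun x => f a + ∫ t in a..x, D t with hudef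
  have hu_cont : ContinuousOn u (Icc a b) := by
    apply continuousOn_const.add
    have := intervalIntegral.continuousOn_primitive hDIcc
    apply this.congr
    intro x hx
    show ∫ t in a..x, D t = ∫ t in Ioc a x, D t
    rw [intervalIntegral.integral_of_le hx.1]
  have hIccsub : Icc a b ⊆ Ioo 0 r₀ := fun x hx =>
    ⟨lt_of_lt_of_le ha0 hx.1, lt_of_le_of_lt hx.2 hbr⟩
  have hu_le : ∀ x ∈ Icc a b, u x ≤ f x := by
    intro x hx
    have := hDf a x ha0 hx.1 (lt_of_le_of_lt hx.2 hbr)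
    simp only [hudef]
    linarith
  have hu_nn : ∀ x ∈ Icc a b, 0 ≤ u x := by
    intro x hx
    have h1 : 0 ≤ f a := hnn a ⟨ha0, lt_of_le_of_lt hab hbr⟩
    have h2 : 0 ≤ ∫ t in a..x, D t :=
      intervalIntegral.integral_nonneg hx.1
        (fun t ht => hDnn t ⟨ht.1, le_trans ht.2 hx.2⟩)
    simp only [hudef]
    linarith
  -- bounds on the weight
  have hw'cont : ContinuousOn w' (Icc a b) := by
    have hne : ∀ x ∈ Icc a b, x ≠ 0 := fun x hx => (lt_of_lt_of_le ha0 hx.1).ne'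
    have hne' : ∀ x ∈ Icc a b, x ^ n ≠ 0 := fun x hx => pow_ne_zero _ (hne x hx)
    apply ContinuousOn.mul
    · exact continuousOn_const.sub (continuousOn_const.div continuousOn_id hne)
    · exact ((Real.continuous_exp.comp (continuous_const.mul continuous_id)).continuousOn).div
        (continuousOn_pow n) hne'
  obtain ⟨C, hCb⟩ := isCompact_Icc.exists_bound_of_continuousOn hw'cont
  have hCb' : ∀ x ∈ Icc a b, |w' x| ≤ C := fun x hx => by
    have := hCb x hx; rwa [Real.norm_eq_abs] at this
  have hwmem : ∀ x ∈ Icc a b, HasDerivAt w (w' x) x := fun x hx =>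
    hwderiv x (lt_of_lt_of_le ha0 hx.1)
  -- integrability of the pieces
  have hw'int : IntegrableOn w' (Ioc a b) := by
    refine Measure.integrableOn_of_bounded (M := C) (measure_Ioc_lt_top).ne
      hw'm.aestronglyMeasurable ?_
    filter_upwards [ae_restrict_mem measurableSet_Ioc] with x hx
    exact hCb x ⟨hx.1.le, hx.2⟩
  obtain ⟨K, hK⟩ := isCompact_Icc.exists_bound_of_continuousOn hu_cont
  have hbu : IntegrableOn (fun x => w' x * u x) (Ioc a b) := by
    refine Integrable.mono' (integrable_const (C * K)) ?_ ?_
    · exact (hw'm.aestronglyMeasurable.restrict).mul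
        ((hu_cont.mono Ioc_subset_Icc_self).aestronglyMeasurable measurableSet_Ioc)
    · filter_upwards [ae_restrict_mem measurableSet_Ioc] with x hx
      have hx' : x ∈ Icc a b := ⟨hx.1.le, hx.2⟩
      rw [Real.norm_eq_abs, abs_mul]
      have h1 := hCb' x hx'
      have h2 := hK x hx'
      rw [Real.norm_eq_abs] at h2
      have h0C : 0 ≤ |w' x| := abs_nonneg _
      exact mul_le_mul h1 h2 (abs_nonneg _) (le_trans h0C h1)
  obtain ⟨Kw, hKw⟩ := isCompact_Icc.exists_bound_of_continuousOn
    (show ContinuousOn w (Icc a b) by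
      have hne' : ∀ x ∈ Icc a b, x ^ n ≠ 0 := fun x hx =>
        pow_ne_zero _ (lt_of_lt_of_le ha0 hx.1).ne'
      exact ((Real.continuous_exp.comp (continuous_const.mul continuous_id)).continuousOn).div
        (continuousOn_pow n) hne')
  have hwD : IntegrableOn (fun x => w x * D x) (Ioc a b) := by
    refine Integrable.mono' (hD.norm.const_mul Kw) ?_ ?_
    · exact (((Real.continuous_exp.comp (continuous_const.mul continuous_id)).continuousOn.div
        (continuousOn_pow n) (fun x hx => pow_ne_zero _ (lt_of_lt_of_le ha0 hx.1).ne')).mono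
          Ioc_subset_Icc_self).aestronglyMeasurable measurableSet_Ioc |>.mul
            hDm.aestronglyMeasurable
    · filter_upwards [ae_restrict_mem measurableSet_Ioc] with x hx
      have hx' : x ∈ Icc a b := ⟨hx.1.le, hx.2⟩
      rw [Real.norm_eq_abs, abs_mul, ← Real.norm_eq_abs (w x), ← Real.norm_eq_abs (D x)]
      exact mul_le_mul_of_nonneg_right (hKw x hx') (norm_nonneg _)
  -- FTC for w' on [a,b] and subintervals
  have hw'ftc : ∫ x in Ioc a b, w' x = w b - w a := by
    rw [← intervalIntegral.integral_of_le hab]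
    apply intervalIntegral.integral_eq_sub_of_hasDerivAt
    · intro x hx
      rw [uIcc_of_le hab] at hx
      exact hwmem x hx
    · rw [intervalIntegrable_iff_integrableOn_Ioc_of_le hab]
      exact hw'int
  -- the key identity
  have hS : u b = f a + ∫ t in Ioc a b, D t := by
    simp only [hudef]
    rw [intervalIntegral.integral_of_le hab]
  have identity : ∫ x in Ioc a b, (w' x * u x + w x * D x) = w b * u b - w a * u a := by
    have split : ∀ x ∈ Ioc a b, w' x * u x + w x * D x =
        f a * w' x + (w' x * (∫ t in Ioc a x, D t) + w x * D x) := by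
      intro x hx
      simp only [hudef]
      rw [intervalIntegral.integral_of_le hx.1.le]
      ring
    rw [setIntegral_congr_fun measurableSet_Ioc split]
    have hbu' : IntegrableOn (fun x => w' x * (∫ t in Ioc a x, D t)) (Ioc a b) := by
      apply (hbu.sub (hw'int.const_mul (f a))).congr
      filter_upwards [ae_restrict_mem measurableSet_Ioc] with x hx
      simp only [Pi.sub_apply, hudef]
      rw [intervalIntegral.integral_of_le hx.1.le]
      ring
    have step1 : ∫ x in Ioc a b,
        (f a * w' x + (w' x * (∫ t in Ioc a x, D t) + w x * D x)) =
        (∫ x in Ioc a b, f a * w' x) +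
          ∫ x in Ioc a b, (w' x * (∫ t in Ioc a x, D t) + w x * D x) :=
      integral_add (hw'int.const_mul (f a)) (hbu'.add hwD)
    have step2 : ∫ x in Ioc a b, (w' x * (∫ t in Ioc a x, D t) + w x * D x) =
        (∫ x in Ioc a b, w' x * (∫ t in Ioc a x, D t)) + ∫ x in Ioc a b, w x * D x :=
      integral_add hbu' hwD
    rw [step1, step2, integral_const_mul, hw'ftc,
      triangle_swap hab hDm hD hw'm hwmem hCb']
    have hsplit2 : ∫ t in Ioc a b, (w b - w t) * D t =
        w b * (∫ t in Ioc a b, D t) - ∫ t in Ioc a b, w t * D t := by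
      have : ∀ t ∈ Ioc a b, (w b - w t) * D t = w b * D t - w t * D t := by
        intro t _; ring
      rw [setIntegral_congr_fun measurableSet_Ioc this,
        integral_sub (hD.const_mul (w b)) hwD, integral_const_mul]
    rw [hsplit2, hS]
    have hua : u a = f a := by
      simp only [hudef, intervalIntegral.integral_same, add_zero]
    rw [hua]
    ring
  -- nonnegativity of the integrand
  have hnonneg : 0 ≤ ∫ x in Ioc a b, (w' x * u x + w x * D x) := by
    apply setIntegral_nonneg_ae measurableSet_Ioc
    filter_upwards [hkey] with x hk hx
    have hx' : x ∈ Icc a b := ⟨hx.1.le, hx.2⟩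
    have hxIoo : x ∈ Ioo 0 r₀ := hIccsub hx'
    have hxpos : 0 < x := hxIoo.1
    have h1 : (N / x - Λ) * f x ≤ D x := hk hxIoo
    have h2 : 0 ≤ D x := hDnn x hx'
    have h3 : u x ≤ f x := hu_le x hx'
    have h4 : 0 ≤ u x := hu_nn x hx'
    have h5 : 0 < w x := hwpos x hxpos
    have key : 0 ≤ (Λ - N / x) * u x + D x := by
      rcases le_or_gt 0 (N / x - Λ) with hc | hc
      · have : (N / x - Λ) * u x ≤ (N / x - Λ) * f x := mul_le_mul_of_nonneg_left h3 hc
        nlinarith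
      · have hpos : 0 ≤ (Λ - N / x) * u x := mul_nonneg (by linarith) h4
        linarith
    have : w' x * u x + w x * D x = w x * ((Λ - N / x) * u x + D x) := by
      simp only [hw'def]; ring
    rw [this]
    exact mul_nonneg h5.le key
  -- conclude
  have hmain : w a * u a ≤ w b * u b := by linarith [identity ▸ hnonneg]
  have hua : u a = f a := by simp only [hudef, intervalIntegral.integral_same, add_zero]
  have hub : u b ≤ f b := hu_le b ⟨hab, le_refl b⟩
  have hwb : 0 < w b := hwpos b hb0
  have hfinal : w a * f a ≤ w b * f b := by
    calc w a * f a = w a * u a := by rw [hua]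
      _ ≤ w b * u b := hmain
      _ ≤ w b * f b := mul_le_mul_of_nonneg_left hub hwb.le
  calc Real.exp (↑n * Cs / (θ₀ * unitBallVol n) * a) * f a / a ^ n = w a * f a := by
        simp only [hwdef]; ring
    _ ≤ w b * f b := hfinal
    _ = Real.exp (↑n * Cs / (θ₀ * unitBallVol n) * b) * f b / b ^ n := by
        simp only [hwdef]; ring
end

section
/- Let f : (0,s) → [0,∞) be nondecreasing and satisfy, for a.e. r ∈ (0,s): either f'(r) ≥ c·r^(n-1), or (f^(1/n))'(r) ≥ c, where c > 0 and n ≥ 1, with Df ≥ f'·dr. Then there exists c₀ > 0 depending only on n and c such that f(r) ≥ c₀·rⁿ for all r ∈ (0,s). (Hint: split (0,s) into the sets L₁, L₂ where each alternative holds; at least one has measure ≥ s/2, and integrate over the corresponding set.) -/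
/-!
On `[r/2, r]` put `κ = c (r/2)^(n-1)`. Almost everywhere there, either `f' ≥ κ` or
`(f^(1/n))' ≥ c`, and both derivatives are nonnegative by monotonicity, so
`1 ≤ f'/κ + (f^(1/n))'/c`. Integrating, and using `∫ F' ≤ F(r) - F(r/2)` for monotone `F`
(Lebesgue), gives `r/2 ≤ f(r)/κ + f(r)^(1/n)/c`; hence `f(r) ≥ κ r/4 = c rⁿ/2ⁿ⁺¹` or
`f(r) ≥ (c r/4)ⁿ`.
-/

open MeasureTheory Set

lemma MonotoneOn.deriv_nonneg_of_mem_Ioo {F : ℝ → ℝ} {a b t : ℝ} (hF : MonotoneOn F (Icc a b))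
    (ht : t ∈ Ioo a b) : 0 ≤ deriv F t := by
  rw [← derivWithin_of_mem_nhds (Icc_mem_nhds ht.1 ht.2)]
  exact hF.derivWithin_nonneg

lemma MonotoneOn.intervalIntegral_deriv_le {F : ℝ → ℝ} {a b : ℝ} (hab : a ≤ b)
    (hF : MonotoneOn F (Icc a b)) : ∫ t in a..b, deriv F t ≤ F b - F a := by
  have hFab : 0 ≤ F b - F a := sub_nonneg.2 <| hF (left_mem_Icc.2 hab) (right_mem_Icc.2 hab) hab
  rw [← uIcc_of_le hab] at hF
  have h := hF.intervalIntegral_deriv_mem_uIcc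
  rw [uIcc_of_le hFab] at h
  exact h.2

theorem sub_le_div_add_div_of_ae_le_deriv_or_le_deriv {F G : ℝ → ℝ} {a b α β : ℝ} (hab : a ≤ b)
    (hF : MonotoneOn F (Icc a b)) (hG : MonotoneOn G (Icc a b)) (hα : 0 < α) (hβ : 0 < β)
    (h : ∀ᵐ t, t ∈ Ioo a b → α ≤ deriv F t ∨ β ≤ deriv G t) :
    b - a ≤ (F b - F a) / α + (G b - G a) / β := by
  have hFi : IntervalIntegrable (deriv F) volume a b :=
    (uIcc_of_le hab ▸ hF).intervalIntegrable_deriv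
  have hGi : IntervalIntegrable (deriv G) volume a b :=
    (uIcc_of_le hab ▸ hG).intervalIntegrable_deriv
  have hpoint : (fun _ ↦ (1 : ℝ)) ≤ᵐ[volume.restrict (Icc a b)]
      fun t ↦ deriv F t / α + deriv G t / β := by
    rw [← Measure.restrict_congr_set Ioo_ae_eq_Icc, Filter.EventuallyLE,
      ae_restrict_iff' measurableSet_Ioo]
    filter_upwards [h] with t ht hmem
    have hF' : 0 ≤ deriv F t / α := div_nonneg (hF.deriv_nonneg_of_mem_Ioo hmem) hα.le
    have hG' : 0 ≤ deriv G t / β := div_nonneg (hG.deriv_nonneg_of_mem_Ioo hmem) hβ.le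
    rcases ht hmem with hle | hle
    · linarith [(one_le_div hα).2 hle]
    · linarith [(one_le_div hβ).2 hle]
  calc b - a = ∫ _ in a..b, (1 : ℝ) := by simp
    _ ≤ ∫ t in a..b, (deriv F t / α + deriv G t / β) :=
      intervalIntegral.integral_mono_ae_restrict hab intervalIntegrable_const
        ((hFi.div_const α).add (hGi.div_const β)) hpoint
    _ = (∫ t in a..b, deriv F t) / α + (∫ t in a..b, deriv G t) / β := by
      rw [intervalIntegral.integral_add (hFi.div_const α) (hGi.div_const β),
        intervalIntegral.integral_div, intervalIntegral.integral_div]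
    _ ≤ (F b - F a) / α + (G b - G a) / β := by
      gcongr
      · exact hF.intervalIntegral_deriv_le hab
      · exact hG.intervalIntegral_deriv_le hab

theorem stmt3_general (n : ℕ) (hn : 1 ≤ n) (s c : ℝ) (hc : 0 < c) :
    ∃ c₀ : ℝ, 0 < c₀ ∧ ∀ f : ℝ → ℝ,
      MonotoneOn f (Ioo 0 s) → (∀ r ∈ Ioo 0 s, 0 ≤ f r) →
      (∀ a b : ℝ, 0 < a → a ≤ b → b < s → ∫ r in a..b, deriv f r ≤ f b - f a) →
      (∀ a b : ℝ, 0 < a → a ≤ b → b < s →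
        ∫ r in a..b, deriv (fun t => f t ^ ((1 : ℝ) / n)) r
          ≤ f b ^ ((1 : ℝ) / n) - f a ^ ((1 : ℝ) / n)) →
      (∀ᵐ r ∂(volume : Measure ℝ), r ∈ Ioo 0 s →
        (c * r ^ (n - 1) ≤ deriv f r ∨ c ≤ deriv (fun t => f t ^ ((1 : ℝ) / n)) r)) →
      ∀ r ∈ Ioo 0 s, c₀ * r ^ n ≤ f r := by
  obtain ⟨m, rfl⟩ := Nat.exists_eq_add_of_le' hn
  refine ⟨min (c / 2 ^ (m + 2)) ((c / 4) ^ (m + 1)), by positivity, ?_⟩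
  intro f hf hf₀ _ _ hdich r ⟨hr₀, hrs⟩
  set g := fun t ↦ f t ^ ((1 : ℝ) / (m + 1 : ℕ))
  have hsub : Icc (r / 2) r ⊆ Ioo 0 s := Icc_subset_Ioo (by positivity) hrs
  have hg : MonotoneOn g (Ioo 0 s) := fun x hx y hy hxy ↦
    Real.rpow_le_rpow (hf₀ x hx) (hf hx hy hxy) (by positivity)
  have hκ : 0 < c * (r / 2) ^ m := by positivity
  have key := sub_le_div_add_div_of_ae_le_deriv_or_le_deriv (by linarith) (hf.mono hsub)
    (hg.mono hsub) hκ hc <| by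
      filter_upwards [hdich] with t ht hmem
      refine (ht (hsub (Ioo_subset_Icc_self hmem))).imp_left fun hle ↦ le_trans ?_ hle
      rw [add_tsub_cancel_right]
      gcongr
      exact hmem.1.le
  rcases le_or_gt (r / 4) (f r / (c * (r / 2) ^ m)) with hbig | hsmall
  · calc min (c / 2 ^ (m + 2)) ((c / 4) ^ (m + 1)) * r ^ (m + 1)
        ≤ c / 2 ^ (m + 2) * r ^ (m + 1) := by gcongr; exact min_le_left _ _
      _ = c * (r / 2) ^ m * (r / 4) := by rw [div_pow]; ring
      _ ≤ f r := by rwa [le_div_iff₀' hκ] at hbig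
  · have hfa : 0 ≤ f (r / 2) := hf₀ _ (hsub (left_mem_Icc.2 (by linarith)))
    have hga : 0 ≤ g (r / 2) := Real.rpow_nonneg hfa _
    have hgr : c * (r / 4) ≤ g r := by
      rw [← le_div_iff₀' hc]
      rw [sub_div, sub_div] at key
      linarith [div_nonneg hfa hκ.le, div_nonneg hga hc.le]
    calc min (c / 2 ^ (m + 2)) ((c / 4) ^ (m + 1)) * r ^ (m + 1)
        ≤ (c / 4) ^ (m + 1) * r ^ (m + 1) := by gcongr; exact min_le_right _ _
      _ = (c * (r / 4)) ^ (m + 1) := by ring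
      _ ≤ g r ^ (m + 1) := by gcongr
      _ = f r := by
        rw [← Real.rpow_natCast, ← Real.rpow_mul (hf₀ r ⟨hr₀, hrs⟩), one_div,
          inv_mul_cancel₀ (by positivity), Real.rpow_one]

/-- Dichotomy density bound: if a nondecreasing nonnegative `f` on `(0,s)` satisfies, for
a.e. `r`, either `f'(r) ≥ c r^(n-1)` or `(f^(1/n))'(r) ≥ c`, with the distributional
derivatives of `f` and `f^(1/n)` dominating the a.e. derivatives, then `f(r) ≥ c₀ rⁿ`
on `(0,s)` for some `c₀ > 0` depending only on `n` and `c`. -/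
theorem stmt3 (n : ℕ) (hn : 1 ≤ n) (s c : ℝ) (hs : 0 < s) (hc : 0 < c) :
    ∃ c₀ : ℝ, 0 < c₀ ∧ ∀ f : ℝ → ℝ,
      MonotoneOn f (Ioo 0 s) → (∀ r ∈ Ioo 0 s, 0 ≤ f r) →
      (∀ a b : ℝ, 0 < a → a ≤ b → b < s → ∫ r in a..b, deriv f r ≤ f b - f a) →
      (∀ a b : ℝ, 0 < a → a ≤ b → b < s →
        ∫ r in a..b, deriv (fun t => f t ^ ((1 : ℝ) / n)) r
          ≤ f b ^ ((1 : ℝ) / n) - f a ^ ((1 : ℝ) / n)) →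
      (∀ᵐ r ∂(volume : Measure ℝ), r ∈ Ioo 0 s →
        (c * r ^ (n - 1) ≤ deriv f r ∨ c ≤ deriv (fun t => f t ^ ((1 : ℝ) / n)) r)) →
      ∀ r ∈ Ioo 0 s, c₀ * r ^ n ≤ f r :=
  stmt3_general n hn s c hc
end

section
/- Fix n ≥ 1 and η ∈ (0,1/2). Define u_η : ℝ → [0,∞) by u_η(t) = max{0, η·t} for t ≤ 1−η, u_η(t) = η(1−η) + (t−(1−η))/η · (1 − η(1−η)) for t ∈ [1−η, 1], and u_η(t) = t for t ≥ 1. Then u_η(t) ≤ t for all t ≥ 0, u_η'(t) ≤ 1/η a.e., and ∫_{1−η}^{1} u_η'(t)·(u_η(t)/t)^(n−1) dt ≤ (1/(1−η)^(n−1)) · (1 − ηⁿ(1−η)ⁿ)/n, which converges to 1/n as η → 0⁺. Moreover ∫_{1−η}^{1} u_η'(t)·(u_η(t)/t)ⁿ dt ≥ (1 − η^(n+1)(1−η)^(n+1))/(n+1), which converges to 1/(n+1) as η → 0⁺. -/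
open MeasureTheory Set Filter

/-- The radial profile `u_η` used in the construction of cone competitors. -/
noncomputable def uEta (η : ℝ) : ℝ → ℝ := fun t =>
  if t ≤ 1 - η then max 0 (η * t)
  else if t ≤ 1 then η * (1 - η) + ((t - (1 - η)) / η) * (1 - η * (1 - η))
  else t

/-- Explicit estimates for `u_η`: `u_η(t) ≤ t` for `t ≥ 0`, `u_η' ≤ 1/η` a.e., the area
integral `∫_{1-η}^1 u_η' (u_η/t)^(n-1) dt` is at most `(1-η)^{-(n-1)} (1-ηⁿ(1-η)ⁿ)/n`
(which tends to `1/n` as `η → 0⁺`), and the volume integral `∫_{1-η}^1 u_η' (u_η/t)ⁿ dt`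
is at least `(1-η^(n+1)(1-η)^(n+1))/(n+1)` (which tends to `1/(n+1)` as `η → 0⁺`). -/
theorem stmt5 (n : ℕ) (hn : 1 ≤ n) :
    (∀ η ∈ Ioo (0 : ℝ) (1 / 2),
      (∀ t : ℝ, 0 ≤ t → uEta η t ≤ t) ∧
      (∀ᵐ t ∂(volume : Measure ℝ), deriv (uEta η) t ≤ 1 / η) ∧
      ((∫ t in (1 - η)..1, deriv (uEta η) t * (uEta η t / t) ^ (n - 1))
        ≤ (1 / (1 - η) ^ (n - 1)) * (1 - η ^ n * (1 - η) ^ n) / (n : ℝ)) ∧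
      ((1 - η ^ (n + 1) * (1 - η) ^ (n + 1)) / ((n : ℝ) + 1)
        ≤ ∫ t in (1 - η)..1, deriv (uEta η) t * (uEta η t / t) ^ n)) ∧
    Tendsto (fun η : ℝ => (1 / (1 - η) ^ (n - 1)) * (1 - η ^ n * (1 - η) ^ n) / (n : ℝ))
      (nhdsWithin 0 (Ioi 0)) (nhds (1 / (n : ℝ))) ∧
    Tendsto (fun η : ℝ => (1 - η ^ (n + 1) * (1 - η) ^ (n + 1)) / ((n : ℝ) + 1))
      (nhdsWithin 0 (Ioi 0)) (nhds (1 / ((n : ℝ) + 1))) := by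
  have hn0 : (n : ℝ) ≠ 0 := by positivity
  refine ⟨?_, ?_, ?_⟩
  · rintro η ⟨hη0, hη2⟩
    have hη1 : η < 1 := by linarith
    have hηe : (1:ℝ)/2 ≤ 1 - η := by linarith
    set d : ℝ := 1 - η * (1 - η) with hd
    set c : ℝ := d / η with hc
    set L : ℝ → ℝ := fun t => η * (1 - η) + ((t - (1 - η)) / η) * d with hLdef
    have hd0 : 0 ≤ d := by nlinarith
    have hd1 : d ≤ 1 := by nlinarith
    have hc0 : 0 ≤ c := div_nonneg hd0 hη0.le
    have hLderiv : ∀ t : ℝ, HasDerivAt L c t := by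
      intro t
      have h := ((((hasDerivAt_id t).sub_const (1 - η)).div_const η).mul_const d).const_add
        (η * (1 - η))
      refine h.congr_deriv ?_
      rw [hc]; ring
    have hLcont : Continuous L := by
      have := fun t => (hLderiv t).continuousAt
      exact continuous_iff_continuousAt.mpr this
    have huL : ∀ t ∈ Ioo (1 - η) 1, uEta η t = L t := by
      intro s hs
      simp only [uEta]
      rw [if_neg (not_le.mpr hs.1), if_pos hs.2.le]
    have hderiv : ∀ t ∈ Ioo (1 - η) 1, deriv (uEta η) t = c := by
      intro t ht
      have hev : uEta η =ᶠ[nhds t] L :=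
        Filter.eventually_of_mem (isOpen_Ioo.mem_nhds ht) (fun s hs => huL s hs)
      rw [hev.deriv_eq, (hLderiv t).deriv]
    have hL1 : L 1 = 1 := by
      simp only [hLdef]
      field_simp
      ring
    have hLe : L (1 - η) = η * (1 - η) := by simp only [hLdef]; ring
    have hLnn : ∀ t ∈ Icc (1 - η) 1, 0 ≤ L t := by
      intro t ht
      have h1 : 0 ≤ (t - (1 - η)) / η := div_nonneg (by linarith [ht.1]) hη0.le
      have : 0 ≤ ((t - (1 - η)) / η) * d := mul_nonneg h1 hd0
      simp only [hLdef]
      nlinarith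
    have key : ∀ k : ℕ, (∫ t in (1 - η)..1, c * L t ^ k)
        = (1 - (η * (1 - η)) ^ (k + 1)) / ((k : ℝ) + 1) := by
      intro k
      have hk : ((k : ℝ) + 1) ≠ 0 := by positivity
      rw [intervalIntegral.integral_eq_sub_of_hasDerivAt
        (f := fun t => L t ^ (k + 1) / ((k : ℝ) + 1)) (f' := fun t => c * L t ^ k)
        (fun t _ => by
          have h := ((hLderiv t).pow (k + 1)).div_const ((k : ℝ) + 1)
          refine h.congr_deriv ?_
          simp only [Nat.add_sub_cancel]
          push_cast
          field_simp)
        ((continuous_const.mul (hLcont.pow k)).intervalIntegrable _ _)]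
      rw [hL1, hLe, one_pow]
      ring
    have hcongr : ∀ k : ℕ, (∫ t in (1 - η)..1, deriv (uEta η) t * (uEta η t / t) ^ k)
        = ∫ t in (1 - η)..1, c * (L t / t) ^ k := by
      intro k
      apply intervalIntegral.integral_congr_ae
      have h1 : ∀ᵐ x : ℝ ∂volume, x ≠ 1 := by
        rw [ae_iff]
        simp only [not_not, Set.setOf_eq_eq_singleton]
        exact measure_singleton 1
      filter_upwards [h1] with x hx hmem
      rw [Set.uIoc_of_le (by linarith : (1 : ℝ) - η ≤ 1)] at hmem
      have hx' : x ∈ Ioo (1 - η) 1 := ⟨hmem.1, lt_of_le_of_ne hmem.2 hx⟩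
      rw [hderiv x hx', huL x hx']
    have hcontIntg : ∀ k : ℕ, IntervalIntegrable (fun t => c * (L t / t) ^ k)
        volume (1 - η) 1 := by
      intro k
      apply ContinuousOn.intervalIntegrable
      rw [Set.uIcc_of_le (by linarith : (1 : ℝ) - η ≤ 1)]
      apply ContinuousOn.mul continuousOn_const
      apply ContinuousOn.pow
      exact (hLcont.continuousOn.div continuousOn_id
        (fun t ht => by dsimp; intro h; rw [h] at ht; exact absurd ht.1 (by linarith)))
    refine ⟨?_, ?_, ?_, ?_⟩
    · -- u ≤ t
      intro t ht
      simp only [uEta]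
      split_ifs with h1 h2
      · exact max_le ht (by nlinarith)
      · have hkey : η * (η * (1 - η) + (t - (1 - η)) / η * (1 - η * (1 - η)))
            = η * t + (t - 1) * (1 - η) ^ 2 := by field_simp; ring
        nlinarith [mul_nonneg (by linarith : (0:ℝ) ≤ 1 - t) (sq_nonneg (1 - η))]
      · exact le_refl t
    · -- deriv bound a.e.
      have h1 : ∀ᵐ x : ℝ ∂volume, x ∉ ({0, 1 - η, 1} : Set ℝ) := by
        rw [ae_iff]
        simp only [not_not, Set.setOf_mem_eq]
        exact ((Set.toFinite _).countable).measure_zero _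
      filter_upwards [h1] with t htn
      simp only [Set.mem_insert_iff, Set.mem_singleton_iff, not_or] at htn
      obtain ⟨h0, he, h1'⟩ := htn
      rcases lt_or_gt_of_ne h0 with ht0 | ht0
      · -- t < 0
        have hev : uEta η =ᶠ[nhds t] (fun _ => (0 : ℝ)) := by
          refine Filter.eventually_of_mem (Iio_mem_nhds ht0) (fun s hs => ?_)
          simp only [uEta, Set.mem_Iio] at *
          rw [if_pos (by linarith), max_eq_left (by nlinarith)]
        rw [hev.deriv_eq, deriv_const]
        positivity
      · rcases lt_or_gt_of_ne he with hte | hte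
        · -- 0 < t < 1 - η
          have hev : uEta η =ᶠ[nhds t] (fun s => η * s) := by
            refine Filter.eventually_of_mem (isOpen_Ioo.mem_nhds ⟨ht0, hte⟩) (fun s hs => ?_)
            simp only [uEta]
            rw [if_pos hs.2.le, max_eq_right (by nlinarith [hs.1])]
          have hda : HasDerivAt (fun s : ℝ => η * s) η t := by
            simpa using (hasDerivAt_id t).const_mul η
          rw [hev.deriv_eq, hda.deriv, le_div_iff₀ hη0]
          nlinarith
        · rcases lt_or_gt_of_ne h1' with ht1 | ht1
          · -- 1 - η < t < 1
            rw [hderiv t ⟨hte, ht1⟩, hc, div_le_div_iff₀ hη0 hη0]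
            nlinarith
          · -- t > 1
            have hev : uEta η =ᶠ[nhds t] (fun s => s) := by
              refine Filter.eventually_of_mem (Ioi_mem_nhds ht1) (fun s hs => ?_)
              simp only [uEta, Set.mem_Ioi] at *
              rw [if_neg (by linarith), if_neg (by linarith)]
            rw [hev.deriv_eq, show deriv (fun s : ℝ => s) t = 1 from deriv_id t, le_div_iff₀ hη0]
            nlinarith
    · -- area integral bound
      rw [hcongr (n - 1)]
      have hmono : (∫ t in (1 - η)..1, c * (L t / t) ^ (n - 1))
          ≤ ∫ t in (1 - η)..1, 1 / (1 - η) ^ (n - 1) * (c * L t ^ (n - 1)) := by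
        apply intervalIntegral.integral_mono_on (by linarith) (hcontIntg (n - 1))
        · exact (continuous_const.mul (continuous_const.mul
            (hLcont.pow (n - 1)))).intervalIntegrable _ _
        · intro t ht
          have ht0 : (0 : ℝ) < t := by linarith [ht.1]
          have hLt : 0 ≤ L t := hLnn t ht
          calc c * (L t / t) ^ (n - 1) ≤ c * (L t / (1 - η)) ^ (n - 1) := by
                gcongr
                exact ht.1
            _ = 1 / (1 - η) ^ (n - 1) * (c * L t ^ (n - 1)) := by
                rw [div_pow]; ring
      refine hmono.trans ?_
      rw [intervalIntegral.integral_const_mul, key (n - 1)]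
      have hcast : ((n - 1 : ℕ) : ℝ) + 1 = (n : ℝ) := by
        rw [Nat.cast_sub hn]; push_cast; ring
      rw [Nat.sub_add_cancel hn, hcast, mul_pow]
      rw [mul_div_assoc]
    · -- volume integral bound
      rw [hcongr n]
      have hmono : (∫ t in (1 - η)..1, c * L t ^ n)
          ≤ ∫ t in (1 - η)..1, c * (L t / t) ^ n := by
        apply intervalIntegral.integral_mono_on (by linarith)
          ((continuous_const.mul (hLcont.pow n)).intervalIntegrable _ _) (hcontIntg n)
        intro t ht
        have ht0 : (0 : ℝ) < t := by linarith [ht.1]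
        have hLt : 0 ≤ L t := hLnn t ht
        have hle : L t ≤ L t / t := by
          rw [le_div_iff₀ ht0]
          nlinarith [ht.2]
        exact mul_le_mul_of_nonneg_left (pow_le_pow_left₀ hLt hle n) hc0
      refine le_trans ?_ hmono
      rw [key n, mul_pow]
  · -- tendsto 1/n
    have hcont : ContinuousAt
        (fun η : ℝ => (1 / (1 - η) ^ (n - 1)) * (1 - η ^ n * (1 - η) ^ n) / (n : ℝ)) 0 := by
      apply ContinuousAt.div_const
      apply ContinuousAt.mul
      · exact ContinuousAt.div continuousAt_const (by fun_prop) (by norm_num)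
      · fun_prop
    have h := hcont.tendsto.mono_left (nhdsWithin_le_nhds (s := Ioi (0:ℝ)))
    convert h using 2
    simp [zero_pow (Nat.one_le_iff_ne_zero.mp hn)]
  · -- tendsto 1/(n+1)
    have hcont : ContinuousAt
        (fun η : ℝ => (1 - η ^ (n + 1) * (1 - η) ^ (n + 1)) / ((n : ℝ) + 1)) 0 := by
      fun_prop
    have h := hcont.tendsto.mono_left (nhdsWithin_le_nhds (s := Ioi (0:ℝ)))
    convert h using 2
    simp
end

section
/- Fix n ≥ 1, τ ∈ (0,1), and r > 0. Let S = { y ∈ B_r(0) ⊂ ℝ^(n+1) : |y·ν| < τr } for a fixed unit vector ν. Then there exists a bi-Lipschitz map Φ : ℝ^(n+1) → ℝ^(n+1) with {Φ ≠ id} ⊂⊂ B_{2r}(0), Φ(B_{2r}(0)) = B_{2r}(0), and Φ(∂S_t) = ∂B_t(0) for every t ∈ (0,r), where S_t = { y ∈ B_t(0) : |y·ν| < τt }; moreover the Lipschitz constants of Φ and Φ⁻¹ depend only on n and τ. -/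
open Metric Set

namespace Stmt15Aux

section smulest
variable {E : Type*} [NormedAddCommGroup E] [NormedSpace ℝ E]

/-- key estimate for ray-preserving maps -/
lemma smul_est (x y : E) (a b C : ℝ) (hx : (0:ℝ) < ‖x‖) (hxy : ‖x‖ ≤ ‖y‖)
    (ha0 : 0 ≤ a) (haC : a ≤ C * ‖x‖) :
    ‖(a / ‖x‖) • x - (b / ‖y‖) • y‖ ≤ 2 * C * ‖x - y‖ + |a - b| := by
  have hy : (0:ℝ) < ‖y‖ := lt_of_lt_of_le hx hxy
  have hC : 0 ≤ C := by nlinarith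
  have key : (a / ‖x‖) • x - (b / ‖y‖) • y
      = a • ((‖x‖⁻¹) • x - (‖y‖⁻¹) • y) + ((a - b) / ‖y‖) • y := by
    have hab : (a - b) / ‖y‖ = a / ‖y‖ - b / ‖y‖ := sub_div _ _ _
    rw [hab, sub_smul, smul_sub, smul_smul, smul_smul, ← div_eq_mul_inv, ← div_eq_mul_inv]
    abel
  rw [key]
  have hu : ‖(‖x‖⁻¹) • x - (‖y‖⁻¹) • y‖ ≤ 2 * ‖x - y‖ / ‖y‖ := by
    have key2 : (‖x‖⁻¹) • x - (‖y‖⁻¹) • y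
        = (‖y‖⁻¹) • (x - y) + (‖x‖⁻¹ - ‖y‖⁻¹) • x := by
      rw [smul_sub, sub_smul]; abel
    rw [key2]
    refine (norm_add_le _ _).trans ?_
    rw [norm_smul, norm_smul, Real.norm_eq_abs, Real.norm_eq_abs,
      abs_of_pos (inv_pos.mpr hy), abs_of_nonneg (by
        rw [sub_nonneg]; exact inv_anti₀ hx hxy)]
    have h1 : (‖x‖⁻¹ - ‖y‖⁻¹) * ‖x‖ = (‖y‖ - ‖x‖) / ‖y‖ := by
      field_simp
    rw [h1]
    have h2 : ‖y‖ - ‖x‖ ≤ ‖x - y‖ := by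
      have := norm_sub_norm_le y x
      rwa [norm_sub_rev] at this
    rw [inv_mul_eq_div, ← add_div]
    gcongr
    linarith
  refine (norm_add_le _ _).trans ?_
  have e1 : ‖((a - b) / ‖y‖) • y‖ = |a - b| := by
    rw [norm_smul, Real.norm_eq_abs, abs_div, abs_of_pos hy, div_mul_cancel₀ _ hy.ne']
  rw [e1, norm_smul, Real.norm_eq_abs, abs_of_nonneg ha0]
  have : a * ‖(‖x‖⁻¹) • x - (‖y‖⁻¹) • y‖ ≤ 2 * C * ‖x - y‖ := by
    calc a * ‖(‖x‖⁻¹) • x - (‖y‖⁻¹) • y‖ ≤ (C * ‖x‖) * (2 * ‖x - y‖ / ‖y‖) := by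
          apply mul_le_mul haC hu (norm_nonneg _) (by positivity)
    _ = 2 * C * ‖x - y‖ * (‖x‖ / ‖y‖) := by ring
    _ ≤ 2 * C * ‖x - y‖ * 1 := by
          apply mul_le_mul_of_nonneg_left ((div_le_one hy).mpr hxy) (by positivity)
    _ = 2 * C * ‖x - y‖ := by ring
  linarith

end smulest

variable {E : Type*} [NormedAddCommGroup E] [InnerProductSpace ℝ E]

noncomputable def phiA (τ : ℝ) (ν : E) (y : E) : ℝ := max ‖y‖ (|(inner ℝ ν y : ℝ)| / τ)

noncomputable def FA (τ r : ℝ) (ν : E) (x : E) : ℝ :=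
  min (phiA τ ν x) (max ‖x‖ (‖x‖ / 3 + r))

noncomputable def PhiA (τ r : ℝ) (ν : E) (x : E) : E := (FA τ r ν x / ‖x‖) • x

noncomputable def hA (τ : ℝ) (ν : E) (y : E) : ℝ := ‖y‖ ^ 2 / phiA τ ν y

noncomputable def GA (τ r : ℝ) (ν : E) (y : E) : ℝ :=
  max (hA τ ν y) (min ‖y‖ (3 * ‖y‖ - 3 * r))

noncomputable def PsiA (τ r : ℝ) (ν : E) (y : E) : E := (GA τ r ν y / ‖y‖) • y

section basic
variable {τ r : ℝ} {ν : E} (hτ0 : 0 < τ) (hτ1 : τ < 1) (hr : 0 < r) (hν : ‖ν‖ = 1)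

lemma norm_le_phi (y : E) : ‖y‖ ≤ phiA τ ν y := le_max_left _ _

lemma phi_nonneg (y : E) : 0 ≤ phiA τ ν y := le_trans (norm_nonneg y) (norm_le_phi y)

include hτ0 hτ1 hν in
lemma phi_le_norm (y : E) : phiA τ ν y ≤ ‖y‖ / τ := by
  apply max_le
  · rw [le_div_iff₀ hτ0]; nlinarith [norm_nonneg y]
  · gcongr
    calc |(inner ℝ ν y : ℝ)| ≤ ‖ν‖ * ‖y‖ := abs_real_inner_le_norm ν y
    _ = ‖y‖ := by rw [hν, one_mul]

lemma phi_zero : phiA τ ν (0 : E) = 0 := by simp [phiA]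

include hτ0 in
lemma phi_pos {y : E} (hy : y ≠ 0) : 0 < phiA τ ν y :=
  lt_of_lt_of_le (norm_pos_iff.mpr hy) (norm_le_phi y)

lemma phi_smul (y : E) {c : ℝ} (hc : 0 ≤ c) : phiA τ ν (c • y) = c * phiA τ ν y := by
  unfold phiA
  rw [norm_smul, real_inner_smul_right, abs_mul, abs_of_nonneg hc, Real.norm_eq_abs,
    abs_of_nonneg hc, mul_div_assoc, mul_max_of_nonneg _ _ hc]

include hτ0 hτ1 hν in
lemma phi_lip (x y : E) : |phiA τ ν x - phiA τ ν y| ≤ ‖x - y‖ / τ := by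
  refine (abs_max_sub_max_le_max _ _ _ _).trans (max_le ?_ ?_)
  · rw [le_div_iff₀ hτ0]
    nlinarith [abs_norm_sub_norm_le x y, norm_nonneg (x - y)]
  · rw [← sub_div, abs_div, abs_of_pos hτ0]
    gcongr
    calc |(|(inner ℝ ν x : ℝ)| - |(inner ℝ ν y : ℝ)|)| ≤ |(inner ℝ ν x : ℝ) - (inner ℝ ν y : ℝ)| :=
          abs_abs_sub_abs_le_abs_sub _ _
    _ = |(inner ℝ ν (x - y) : ℝ)| := by rw [inner_sub_right]
    _ ≤ ‖ν‖ * ‖x - y‖ := abs_real_inner_le_norm _ _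
    _ = ‖x - y‖ := by rw [hν, one_mul]


-- now the new material
include hr in
lemma norm_le_F (x : E) : ‖x‖ ≤ FA τ r ν x :=
  le_min (norm_le_phi x) (le_max_left _ _)

include hr in
lemma F_nonneg (x : E) : 0 ≤ FA τ r ν x := (norm_nonneg x).trans (norm_le_F hr x)

lemma F_le_phi (x : E) : FA τ r ν x ≤ phiA τ ν x := min_le_left _ _

include hr in
lemma norm_Phi (x : E) : ‖PhiA τ r ν x‖ = FA τ r ν x := by
  rcases eq_or_ne x 0 with rfl | hx
  · simp [PhiA, FA, phi_zero, le_of_lt hr]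
  · have hs : (0:ℝ) < ‖x‖ := norm_pos_iff.mpr hx
    rw [PhiA, norm_smul, Real.norm_eq_abs, abs_div, abs_of_nonneg (F_nonneg hr x),
      abs_of_pos hs, div_mul_cancel₀ _ hs.ne']

include hr in
lemma phi_Phi (x : E) : phiA τ ν (PhiA τ r ν x) = (FA τ r ν x / ‖x‖) * phiA τ ν x := by
  rcases eq_or_ne x 0 with rfl | hx
  · simp [PhiA, phi_zero]
  · exact phi_smul x (div_nonneg (F_nonneg hr x) (norm_nonneg x))

include hτ0 hτ1 hν in
lemma h_bounds (y : E) : τ * ‖y‖ ≤ hA τ ν y ∧ hA τ ν y ≤ ‖y‖ := by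
  rcases eq_or_ne y 0 with rfl | hy
  · simp [hA]
  · have hp : 0 < phiA τ ν y := phi_pos hτ0 hy
    have hs : (0:ℝ) < ‖y‖ := norm_pos_iff.mpr hy
    constructor
    · rw [hA, le_div_iff₀ hp]
      have h3 : phiA τ ν y * τ ≤ ‖y‖ := (le_div_iff₀ hτ0).mp (phi_le_norm hτ0 hτ1 hν y)
      nlinarith
    · rw [hA, div_le_iff₀ hp]
      nlinarith [norm_le_phi (τ := τ) (ν := ν) y]

include hτ0 hτ1 hν in
lemma G_bounds (y : E) : τ * ‖y‖ ≤ GA τ r ν y ∧ GA τ r ν y ≤ ‖y‖ := by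
  obtain ⟨h1, h2⟩ := h_bounds hτ0 hτ1 hν (y := y)
  constructor
  · exact h1.trans (le_max_left _ _)
  · exact max_le h2 (min_le_left _ _)

include hτ0 hτ1 hν in
lemma G_nonneg (y : E) : 0 ≤ GA τ r ν y := by
  have := (G_bounds hτ0 hτ1 hν (r := r) (y := y)).1
  nlinarith [norm_nonneg y]

include hτ0 hτ1 hν hr in
lemma norm_Psi (y : E) : ‖PsiA τ r ν y‖ = GA τ r ν y := by
  rcases eq_or_ne y 0 with rfl | hy
  · simp [PsiA, GA, hA, phi_zero, hr.le]
  · have hs : (0:ℝ) < ‖y‖ := norm_pos_iff.mpr hy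
    rw [PsiA, norm_smul, Real.norm_eq_abs, abs_div, abs_of_nonneg (G_nonneg hτ0 hτ1 hν y),
      abs_of_pos hs, div_mul_cancel₀ _ hs.ne']

include hτ0 hτ1 hν in
lemma phi_Psi (y : E) : phiA τ ν (PsiA τ r ν y) = (GA τ r ν y / ‖y‖) * phiA τ ν y := by
  rcases eq_or_ne y 0 with rfl | hy
  · simp [PsiA, phi_zero]
  · exact phi_smul y (div_nonneg (G_nonneg hτ0 hτ1 hν y) (norm_nonneg y))


include hτ0 hτ1 hr hν in
lemma G_Phi (x : E) (hx : x ≠ 0) : GA τ r ν (PhiA τ r ν x) = ‖x‖ := by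
  set s := ‖x‖ with hs_def
  have hs : (0:ℝ) < s := norm_pos_iff.mpr hx
  set p := phiA τ ν x with hp_def
  have hp : 0 < p := phi_pos hτ0 hx
  have hsp : s ≤ p := norm_le_phi x
  set F := FA τ r ν x with hF_def
  have hsF : s ≤ F := norm_le_F hr x
  have hFp : F ≤ p := F_le_phi x
  have hF : 0 < F := lt_of_lt_of_le hs hsF
  have hnp : ‖PhiA τ r ν x‖ = F := norm_Phi hr x
  have hpp : phiA τ ν (PhiA τ r ν x) = F / s * p := phi_Phi hr x
  have hh : hA τ ν (PhiA τ r ν x) = F * s / p := by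
    rw [hA, hnp, hpp]
    field_simp
  rw [GA, hh, hnp]
  have hchain : F * s / p ≤ s := by
    rw [div_le_iff₀ hp]; nlinarith
  -- case analysis
  rcases le_total p (max s (s / 3 + r)) with hc | hc
  · -- F = p
    have hFeq : F = p := min_eq_left hc
    have : F * s / p = s := by rw [hFeq]; field_simp
    rw [this]
    have : min F (3 * F - 3 * r) ≤ s := by
      rcases le_total (s / 3 + r) s with h1 | h1
      · -- M = s, F = min p s = s  (p ≥ s so p ≤ max = s gives p = s)
        have hms : max s (s / 3 + r) = s := max_eq_left h1
        rw [hms] at hc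
        have : F = s := le_antisymm (hFeq ▸ hc) hsF
        rw [this]
        have : s ≤ 3 * s - 3 * r := by linarith
        simp [min_eq_left this]
      · have hms : max s (s / 3 + r) = s / 3 + r := max_eq_right h1
        rw [hms] at hc
        have : 3 * F - 3 * r ≤ s := by rw [hFeq]; linarith
        exact le_trans (min_le_right _ _) this
    exact max_eq_left this
  · -- F = max s (s/3+r)
    have hFeq : F = max s (s / 3 + r) := min_eq_right hc
    rcases le_total (s / 3 + r) s with h1 | h1
    · have hms : max s (s / 3 + r) = s := max_eq_left h1
      have hFs : F = s := by rw [hFeq, hms]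
      have h2 : s ≤ 3 * s - 3 * r := by linarith
      rw [hFs] at hchain ⊢
      rw [min_eq_left h2]
      exact max_eq_right hchain
    · have hms : max s (s / 3 + r) = s / 3 + r := max_eq_right h1
      have hFs : F = s / 3 + r := by rw [hFeq, hms]
      have h2 : 3 * F - 3 * r = s := by rw [hFs]; ring
      rw [h2, min_eq_right (h2 ▸ hsF : s ≤ F)]
      exact max_eq_right hchain

include hτ0 hτ1 hr hν in
lemma Psi_Phi (x : E) : PsiA τ r ν (PhiA τ r ν x) = x := by
  rcases eq_or_ne x 0 with rfl | hx
  · simp [PhiA, PsiA]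
  · have hs : (0:ℝ) < ‖x‖ := norm_pos_iff.mpr hx
    have hF : 0 < FA τ r ν x := lt_of_lt_of_le hs (norm_le_F hr x)
    rw [PsiA, G_Phi hτ0 hτ1 hr hν x hx, norm_Phi hr x, PhiA, smul_smul]
    rw [div_mul_div_comm]
    rw [mul_comm (FA τ r ν x) ‖x‖] -- make num = denom
    rw [div_self (by positivity), one_smul]

include hτ0 hτ1 hr hν in
lemma F_Psi (y : E) (hy : y ≠ 0) : FA τ r ν (PsiA τ r ν y) = ‖y‖ := by
  set t := ‖y‖ with ht_def
  have ht : (0:ℝ) < t := norm_pos_iff.mpr hy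
  set q := phiA τ ν y with hq_def
  have hq : 0 < q := phi_pos hτ0 hy
  have htq : t ≤ q := norm_le_phi y
  set G := GA τ r ν y with hG_def
  have hG1 : τ * t ≤ G := (G_bounds hτ0 hτ1 hν y).1
  have hG2 : G ≤ t := (G_bounds hτ0 hτ1 hν y).2
  have hG : 0 < G := lt_of_lt_of_le (by positivity) hG1
  have hnp : ‖PsiA τ r ν y‖ = G := norm_Psi hτ0 hτ1 hr hν y
  have hpp : phiA τ ν (PsiA τ r ν y) = G / t * q := phi_Psi hτ0 hτ1 hν y
  have hhy : hA τ ν y = t ^ 2 / q := rfl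
  rw [FA, hnp, hpp]
  rcases le_total t (3 * r / 2) with h1 | h1
  · -- t ≤ 3r/2 : min t (3t-3r) = 3t-3r
    have hmin : min t (3 * t - 3 * r) = 3 * t - 3 * r := min_eq_right (by linarith)
    rcases le_total (3 * t - 3 * r) (t ^ 2 / q) with h2 | h2
    · -- G = t²/q
      have hGe : G = t ^ 2 / q := by rw [hG_def, GA, hhy, hmin, max_eq_left h2]
      have hphi : G / t * q = t := by rw [hGe]; field_simp
      rw [hphi]
      have hmax : t ≤ max G (G / 3 + r) := le_trans (by linarith : t ≤ G / 3 + r) (le_max_right _ _)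
      exact min_eq_left hmax
    · -- G = 3t - 3r
      have hGe : G = 3 * t - 3 * r := by rw [hG_def, GA, hhy, hmin, max_eq_right h2]
      have hq2 : t ^ 2 ≤ G * q := by
        rw [div_le_iff₀ hq] at h2; linarith [hGe ▸ h2]
      have hphi : t ≤ G / t * q := by
        rw [div_mul_eq_mul_div, le_div_iff₀ ht]; nlinarith
      have hmax : max G (G / 3 + r) = t := by
        have : G / 3 + r = t := by rw [hGe]; ring
        rw [this]; exact max_eq_right (by linarith [hGe])
      rw [hmax, min_eq_right hphi]
  · -- t ≥ 3r/2 : G = t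
    have hmin : min t (3 * t - 3 * r) = t := min_eq_left (by linarith)
    have hh2 : t ^ 2 / q ≤ t := by rw [div_le_iff₀ hq]; nlinarith
    have hGe : G = t := by rw [hG_def, GA, hhy, hmin, max_eq_right hh2]
    have hphi : G / t * q = q := by rw [hGe]; field_simp
    rw [hphi]
    have hmax : max G (G / 3 + r) = t := by rw [hGe]; exact max_eq_left (by linarith)
    rw [hmax]; exact min_eq_right htq

include hτ0 hτ1 hr hν in
lemma Phi_Psi (y : E) : PhiA τ r ν (PsiA τ r ν y) = y := by
  rcases eq_or_ne y 0 with rfl | hy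
  · simp [PhiA, PsiA]
  · have ht : (0:ℝ) < ‖y‖ := norm_pos_iff.mpr hy
    have hG1 : τ * ‖y‖ ≤ GA τ r ν y := (G_bounds hτ0 hτ1 hν y).1
    have hG : 0 < GA τ r ν y := lt_of_lt_of_le (by positivity) hG1
    rw [PhiA, F_Psi hτ0 hτ1 hr hν y hy, norm_Psi hτ0 hτ1 hr hν y, PsiA, smul_smul]
    rw [div_mul_div_comm, mul_comm ‖y‖ (GA τ r ν y), div_self (by positivity), one_smul]


include hτ0 hτ1 hν in
lemma F_lip (x y : E) : |FA τ r ν x - FA τ r ν y| ≤ ‖x - y‖ / τ := by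
  refine (abs_min_sub_min_le_max _ _ _ _).trans (max_le (phi_lip hτ0 hτ1 hν x y) ?_)
  refine (abs_max_sub_max_le_max _ _ _ _).trans (max_le ?_ ?_)
  · have h1 := abs_norm_sub_norm_le x y
    rw [le_div_iff₀ hτ0]; nlinarith [norm_nonneg (x - y)]
  · have h1 := abs_norm_sub_norm_le x y
    have h2 : |‖x‖ / 3 + r - (‖y‖ / 3 + r)| = |‖x‖ - ‖y‖| / 3 := by
      rw [show ‖x‖ / 3 + r - (‖y‖ / 3 + r) = (‖x‖ - ‖y‖) / 3 by ring, abs_div]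
      norm_num
    rw [h2, le_div_iff₀ hτ0]
    have := abs_nonneg (‖x‖ - ‖y‖)
    nlinarith [norm_nonneg (x - y)]

include hτ0 hτ1 hν in
lemma h_lip (x y : E) : |hA τ ν x - hA τ ν y| ≤ (2 / τ + 3) * ‖x - y‖ := by
  rcases eq_or_ne x y with rfl | hxy
  · simp
  have hd : (0:ℝ) < ‖x - y‖ := norm_pos_iff.mpr (sub_ne_zero.mpr hxy)
  set d := ‖x - y‖ with hd_def
  have htd : 0 < 2 / τ := by positivity
  have hAB : |‖x‖ - ‖y‖| ≤ d := abs_norm_sub_norm_le x y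
  obtain ⟨hx1, hx2⟩ := h_bounds hτ0 hτ1 hν (y := x)
  obtain ⟨hy1, hy2⟩ := h_bounds hτ0 hτ1 hν (y := y)
  have hx0 : 0 ≤ hA τ ν x := le_trans (by positivity) hx1
  have hy0 : 0 ≤ hA τ ν y := le_trans (by positivity) hy1
  rcases le_or_gt ‖x‖ (2 * d) with hsm | hlg
  · -- small case
    have hB : ‖y‖ ≤ 3 * d := by
      have := abs_le.mp hAB
      linarith [this.2]
    rw [abs_le]
    constructor <;> nlinarith
  · -- large case
    have hx' : x ≠ 0 := by
      intro h; rw [h, norm_zero] at hlg; linarith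
    have hBlg : d < ‖y‖ := by
      have := abs_le.mp hAB
      linarith [this.1]
    have hy' : y ≠ 0 := by
      intro h; rw [h, norm_zero] at hBlg; linarith
    have hP : 0 < phiA τ ν x := phi_pos hτ0 hx'
    have hQ : 0 < phiA τ ν y := phi_pos hτ0 hy'
    set A := ‖x‖; set B := ‖y‖; set P := phiA τ ν x; set Q := phiA τ ν y
    have hAP : A ≤ P := norm_le_phi x
    have hBQ : B ≤ Q := norm_le_phi y
    have hA2B : A ≤ 2 * B := by
      have := abs_le.mp hAB
      linarith [this.2]
    have key : hA τ ν x - hA τ ν y = (A ^ 2 * Q - B ^ 2 * P) / (P * Q) := by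
      rw [hA, hA]
      show A ^ 2 / P - B ^ 2 / Q = _
      rw [div_sub_div _ _ hP.ne' hQ.ne']
      ring
    rw [key, abs_div, abs_of_pos (mul_pos hP hQ), div_le_iff₀ (mul_pos hP hQ)]
    have e0 : A ^ 2 * Q - B ^ 2 * P = A ^ 2 * (Q - P) + (A ^ 2 - B ^ 2) * P := by ring
    have e1 : |A ^ 2 * Q - B ^ 2 * P| ≤ A ^ 2 * |Q - P| + (A + B) * d * P := by
      rw [e0]
      refine (abs_add_le _ _).trans ?_
      rw [abs_mul, abs_mul, abs_of_nonneg (by positivity : (0:ℝ) ≤ A ^ 2),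
        abs_of_pos hP]
      have : |A ^ 2 - B ^ 2| ≤ (A + B) * d := by
        have : A ^ 2 - B ^ 2 = (A - B) * (A + B) := by ring
        rw [this, abs_mul, abs_of_nonneg (by positivity : (0:ℝ) ≤ A + B)]
        calc |A - B| * (A + B) ≤ d * (A + B) := by
              apply mul_le_mul_of_nonneg_right hAB (by positivity)
        _ = (A + B) * d := by ring
      nlinarith [abs_nonneg (Q - P), sq_nonneg A]
    have e2 : |Q - P| ≤ d / τ := by
      rw [abs_sub_comm]
      exact phi_lip hτ0 hτ1 hν x y
    have hA2 : A ^ 2 ≤ 2 * (P * Q) := by nlinarith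
    have hABQ : A + B ≤ 3 * Q := by linarith
    have t1 : A ^ 2 * |Q - P| ≤ 2 * (P * Q) * (d / τ) := by
      apply mul_le_mul hA2 e2 (abs_nonneg _) (by positivity)
    have t2 : (A + B) * d * P ≤ 3 * Q * d * P := by
      apply mul_le_mul_of_nonneg_right ?_ hP.le
      apply mul_le_mul_of_nonneg_right hABQ hd.le
    have efin : 2 * (P * Q) * (d / τ) = 2 / τ * d * (P * Q) := by
      field_simp
    calc |A ^ 2 * Q - B ^ 2 * P| ≤ A ^ 2 * |Q - P| + (A + B) * d * P := e1
    _ ≤ 2 * (P * Q) * (d / τ) + 3 * Q * d * P := by linarith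
    _ = 2 / τ * d * (P * Q) + 3 * d * (P * Q) := by rw [efin]; ring
    _ = (2 / τ + 3) * d * (P * Q) := by ring

include hτ0 hτ1 hν in
lemma G_lip (x y : E) : |GA τ r ν x - GA τ r ν y| ≤ (2 / τ + 3) * ‖x - y‖ := by
  refine (abs_max_sub_max_le_max _ _ _ _).trans (max_le (h_lip hτ0 hτ1 hν x y) ?_)
  refine (abs_min_sub_min_le_max _ _ _ _).trans (max_le ?_ ?_)
  · have h1 := abs_norm_sub_norm_le x y
    have : (0:ℝ) ≤ 2 / τ * ‖x - y‖ := by positivity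
    nlinarith [norm_nonneg (x - y)]
  · have h1 := abs_norm_sub_norm_le x y
    have h2 : |3 * ‖x‖ - 3 * r - (3 * ‖y‖ - 3 * r)| = 3 * |‖x‖ - ‖y‖| := by
      rw [show 3 * ‖x‖ - 3 * r - (3 * ‖y‖ - 3 * r) = 3 * (‖x‖ - ‖y‖) by ring, abs_mul]
      norm_num
    rw [h2]
    have : (0:ℝ) ≤ 2 / τ * ‖x - y‖ := by positivity
    nlinarith [norm_nonneg (x - y)]

include hτ0 hτ1 hr hν in
lemma Phi_lip_aux (x y : E) (hle : ‖x‖ ≤ ‖y‖) :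
    ‖PhiA τ r ν x - PhiA τ r ν y‖ ≤ 3 / τ * ‖x - y‖ := by
  rcases eq_or_ne x 0 with rfl | hx
  · rw [show PhiA τ r ν (0 : E) = 0 by simp [PhiA], zero_sub, norm_neg, norm_Phi hr y,
      zero_sub, norm_neg]
    have h1 := (F_le_phi (r := r) y).trans (phi_le_norm hτ0 hτ1 hν y)
    have h2 : 3 / τ * ‖y‖ = 3 * (‖y‖ / τ) := by ring
    have h3 : 0 ≤ ‖y‖ / τ := div_nonneg (norm_nonneg y) hτ0.le
    rw [h2]
    linarith
  · have hs : (0:ℝ) < ‖x‖ := norm_pos_iff.mpr hx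
    have hest := smul_est x y (FA τ r ν x) (FA τ r ν y) (1 / τ) hs hle
      (F_nonneg hr x) (by
        have := (F_le_phi (r := r) x).trans (phi_le_norm hτ0 hτ1 hν x)
        rw [one_div, inv_mul_eq_div]; exact this)
    have hF := F_lip hτ0 hτ1 hν (r := r) x y
    rw [PhiA, PhiA]
    refine hest.trans ?_
    have e1 : 2 * (1 / τ) * ‖x - y‖ = 2 * (‖x - y‖ / τ) := by ring
    have e2 : 3 / τ * ‖x - y‖ = 3 * (‖x - y‖ / τ) := by ring
    rw [e1, e2]
    linarith


include hτ0 hτ1 hr hν in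
lemma Psi_lip_aux (x y : E) (hle : ‖x‖ ≤ ‖y‖) :
    ‖PsiA τ r ν x - PsiA τ r ν y‖ ≤ (2 / τ + 5) * ‖x - y‖ := by
  rcases eq_or_ne x 0 with rfl | hx
  · rw [show PsiA τ r ν (0 : E) = 0 by simp [PsiA], zero_sub, norm_neg, norm_Psi hτ0 hτ1 hr hν y,
      zero_sub, norm_neg]
    have h1 := (G_bounds hτ0 hτ1 hν (r := r) y).2
    have h2 : (0:ℝ) ≤ 2 / τ * ‖y‖ := by positivity
    nlinarith [norm_nonneg y]
  · have hs : (0:ℝ) < ‖x‖ := norm_pos_iff.mpr hx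
    have hest := smul_est x y (GA τ r ν x) (GA τ r ν y) 1 hs hle
      (G_nonneg hτ0 hτ1 hν x) (by rw [one_mul]; exact (G_bounds hτ0 hτ1 hν x).2)
    have hG := G_lip hτ0 hτ1 hν (r := r) x y
    rw [PsiA, PsiA]
    refine hest.trans ?_
    nlinarith [norm_nonneg (x - y), div_nonneg (by norm_num : (0:ℝ) ≤ 2) hτ0.le]

-- support: Phi is identity outside ball (3r/2)
include hr in
lemma Phi_eq_id (x : E) (hx : 3 * r / 2 ≤ ‖x‖) : PhiA τ r ν x = x := by
  have hs : (0:ℝ) < ‖x‖ := lt_of_lt_of_le (by positivity) hx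
  have h1 : max ‖x‖ (‖x‖ / 3 + r) = ‖x‖ := max_eq_left (by linarith)
  have h2 : FA τ r ν x = ‖x‖ := by
    rw [FA, h1]; exact min_eq_right (norm_le_phi x)
  rw [PhiA, h2, div_self hs.ne', one_smul]

-- the slab's description via phi
include hτ0 in
lemma slab_eq (t : ℝ) :
    {y : E | y ∈ ball (0 : E) t ∧ |(inner ℝ ν y : ℝ)| < τ * t} = {y : E | phiA τ ν y < t} := by
  ext y
  simp only [mem_setOf_eq, mem_ball, dist_zero_right, phiA, max_lt_iff]
  constructor
  · rintro ⟨h1, h2⟩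
    exact ⟨h1, by rwa [div_lt_iff₀ hτ0, mul_comm]⟩
  · rintro ⟨h1, h2⟩
    exact ⟨h1, by rwa [div_lt_iff₀ hτ0, mul_comm] at h2⟩

include hτ0 hν in
lemma phi_continuous : Continuous (phiA τ ν : E → ℝ) := by
  apply Continuous.max continuous_norm
  exact (continuous_const.inner continuous_id).abs.div_const τ

include hτ0 hν in
lemma frontier_slab {t : ℝ} (ht : 0 < t) :
    frontier {y : E | phiA τ ν y < t} = {y : E | phiA τ ν y = t} := by
  have hcont := phi_continuous hτ0 hν
  have hopen : IsOpen {y : E | phiA τ ν y < t} := isOpen_lt hcont continuous_const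
  have hclosure : closure {y : E | phiA τ ν y < t} = {y : E | phiA τ ν y ≤ t} := by
    apply Subset.antisymm
    · exact closure_minimal (fun y (hy : phiA τ ν y < t) => le_of_lt hy) (isClosed_le hcont continuous_const)
    · intro y hy
      rcases lt_or_eq_of_le (show phiA τ ν y ≤ t from hy) with h | h
      · exact subset_closure h
      · -- phi y = t > 0, y ≠ 0
        rw [Metric.mem_closure_iff]
        intro ε hε
        have hy0 : y ≠ 0 := by
          intro h0; rw [h0, phi_zero] at h; exact absurd h (by linarith)
        have hyn : (0:ℝ) < ‖y‖ := norm_pos_iff.mpr hy0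
        set δ : ℝ := min (ε / (2 * ‖y‖)) (1 / 2) with hδ_def
        have hδ0 : 0 < δ := lt_min (by positivity) (by norm_num)
        have hδ1 : δ ≤ 1 / 2 := min_le_right _ _
        refine ⟨(1 - δ) • y, ?_, ?_⟩
        · show phiA τ ν ((1 - δ) • y) < t
          rw [phi_smul y (by linarith)]
          rw [← h]
          have hp : 0 < phiA τ ν y := phi_pos hτ0 hy0
          nlinarith
        · rw [dist_eq_norm]
          have : y - (1 - δ) • y = δ • y := by
            rw [sub_smul, one_smul]; abel
          rw [this, norm_smul, Real.norm_eq_abs, abs_of_pos hδ0]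
          have : δ * ‖y‖ ≤ ε / (2 * ‖y‖) * ‖y‖ :=
            mul_le_mul_of_nonneg_right (min_le_left _ _) (norm_nonneg y)
          have he : ε / (2 * ‖y‖) * ‖y‖ = ε / 2 := by field_simp
          rw [he] at this
          linarith
  rw [frontier, hclosure, hopen.interior_eq]
  ext y
  simp only [mem_diff, mem_setOf_eq, not_lt]
  constructor
  · rintro ⟨h1, h2⟩; exact le_antisymm h1 h2
  · rintro rfl; exact ⟨le_refl _, le_refl _⟩

-- image of the phi-sphere
include hτ0 hτ1 hr hν in
lemma Phi_image_sphere {t : ℝ} (ht0 : 0 < t) (htr : t < r) :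
    PhiA τ r ν '' {y : E | phiA τ ν y = t} = sphere (0 : E) t := by
  apply Subset.antisymm
  · rintro _ ⟨x, hx, rfl⟩
    have hxt : phiA τ ν x = t := hx
    have hx0 : x ≠ 0 := by
      intro h0; rw [h0, phi_zero] at hxt; exact absurd hxt (by linarith)
    have hs : (0:ℝ) < ‖x‖ := norm_pos_iff.mpr hx0
    have hst : ‖x‖ ≤ t := hxt ▸ norm_le_phi x
    rw [mem_sphere_iff_norm, sub_zero, norm_Phi hr x]
    rw [FA, hxt]
    apply min_eq_left
    calc t ≤ r := htr.le
    _ ≤ ‖x‖ / 3 + r := by linarith [norm_nonneg x]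
    _ ≤ max ‖x‖ (‖x‖ / 3 + r) := le_max_right _ _
  · intro z hz
    rw [mem_sphere_iff_norm, sub_zero] at hz
    have hz0 : z ≠ 0 := by
      intro h0; rw [h0, norm_zero] at hz; exact absurd hz.symm (by linarith)
    refine ⟨PsiA τ r ν z, ?_, Phi_Psi hτ0 hτ1 hr hν z⟩
    show phiA τ ν (PsiA τ r ν z) = t
    rw [phi_Psi hτ0 hτ1 hν z]
    have hq : 0 < phiA τ ν z := phi_pos hτ0 hz0
    have hG : GA τ r ν z = ‖z‖ ^ 2 / phiA τ ν z := by
      rw [GA, hA]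
      have h1 : min ‖z‖ (3 * ‖z‖ - 3 * r) = 3 * ‖z‖ - 3 * r :=
        min_eq_right (by rw [hz]; linarith)
      rw [h1]
      apply max_eq_left
      rw [hz]
      have : (0:ℝ) < t ^ 2 / phiA τ ν z := by positivity
      linarith
    rw [hG, hz]
    field_simp

-- image of the ball 2r
include hτ0 hτ1 hr hν in
lemma Phi_image_ball :
    PhiA τ r ν '' ball (0 : E) (2 * r) = ball (0 : E) (2 * r) := by
  apply Subset.antisymm
  · rintro _ ⟨x, hx, rfl⟩
    rw [mem_ball, dist_zero_right] at hx ⊢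
    rw [norm_Phi hr x]
    calc FA τ r ν x ≤ max ‖x‖ (‖x‖ / 3 + r) := min_le_right _ _
    _ < 2 * r := by
        apply max_lt hx
        linarith
  · intro z hz
    rw [mem_ball, dist_zero_right] at hz
    refine ⟨PsiA τ r ν z, ?_, Phi_Psi hτ0 hτ1 hr hν z⟩
    rw [mem_ball, dist_zero_right, norm_Psi hτ0 hτ1 hr hν z]
    exact lt_of_le_of_lt (G_bounds hτ0 hτ1 hν z).2 hz

end basic
end Stmt15Aux


/-- The slab-to-ball bi-Lipschitz deformation: for `n ≥ 1` and `τ ∈ (0,1)` there is a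
Lipschitz constant `L = L(n,τ)` such that for every `r > 0` and every unit vector `ν`
there is a bi-Lipschitz map `Φ` of `ℝ^(n+1)` (with inverse `Ψ`, both `L`-Lipschitz) which
is the identity outside a set compactly contained in `B_{2r}(0)`, maps `B_{2r}(0)` onto
itself, and maps the boundary of each slab
`S_t = { y ∈ B_t(0) : |y·ν| < τ t }`, `t ∈ (0,r)`, onto the sphere `∂B_t(0)`. -/
theorem stmt15 (n : ℕ) (hn : 1 ≤ n) (τ : ℝ) (hτ : τ ∈ Ioo (0 : ℝ) 1) :
    ∃ L : NNReal, ∀ r : ℝ, 0 < r →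
      ∀ ν : EuclideanSpace ℝ (Fin (n + 1)), ‖ν‖ = 1 →
      ∃ Φ Ψ : EuclideanSpace ℝ (Fin (n + 1)) → EuclideanSpace ℝ (Fin (n + 1)),
        LipschitzWith L Φ ∧ LipschitzWith L Ψ ∧
        (∀ x, Ψ (Φ x) = x) ∧ (∀ x, Φ (Ψ x) = x) ∧
        closure {x | Φ x ≠ x} ⊆ ball (0 : EuclideanSpace ℝ (Fin (n + 1))) (2 * r) ∧
        Φ '' ball (0 : EuclideanSpace ℝ (Fin (n + 1))) (2 * r)
          = ball (0 : EuclideanSpace ℝ (Fin (n + 1))) (2 * r) ∧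
        ∀ t ∈ Ioo (0 : ℝ) r,
          Φ '' frontier {y ∈ ball (0 : EuclideanSpace ℝ (Fin (n + 1))) t |
              |(inner ℝ ν y : ℝ)| < τ * t}
            = sphere (0 : EuclideanSpace ℝ (Fin (n + 1))) t := by
  obtain ⟨hτ0, hτ1⟩ := hτ
  refine ⟨Real.toNNReal (8 / τ), ?_⟩
  intro r hr ν hν
  have hL : ((Real.toNNReal (8 / τ) : NNReal) : ℝ) = 8 / τ :=
    Real.coe_toNNReal _ (by positivity)
  refine ⟨Stmt15Aux.PhiA τ r ν, Stmt15Aux.PsiA τ r ν, ?_, ?_,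
    fun x => Stmt15Aux.Psi_Phi hτ0 hτ1 hr hν x,
    fun x => Stmt15Aux.Phi_Psi hτ0 hτ1 hr hν x, ?_, ?_, ?_⟩
  · -- Lipschitz Phi
    apply LipschitzWith.of_dist_le_mul
    intro x y
    rw [hL, dist_eq_norm, dist_eq_norm]
    have h38 : (3:ℝ) / τ ≤ 8 / τ := by gcongr <;> norm_num
    have key : ∀ a b : EuclideanSpace ℝ (Fin (n + 1)), ‖a‖ ≤ ‖b‖ →
        ‖Stmt15Aux.PhiA τ r ν a - Stmt15Aux.PhiA τ r ν b‖ ≤ 8 / τ * ‖a - b‖ := by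
      intro a b h
      refine (Stmt15Aux.Phi_lip_aux hτ0 hτ1 hr hν a b h).trans ?_
      exact mul_le_mul_of_nonneg_right h38 (norm_nonneg _)
    rcases le_total ‖x‖ ‖y‖ with h | h
    · exact key x y h
    · rw [norm_sub_rev, norm_sub_rev x y]; exact key y x h
  · -- Lipschitz Psi
    apply LipschitzWith.of_dist_le_mul
    intro x y
    rw [hL, dist_eq_norm, dist_eq_norm]
    have h6 : (6:ℝ) ≤ 6 / τ := by rw [le_div_iff₀ hτ0]; nlinarith
    have h58 : 2 / τ + 5 ≤ 8 / τ := by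
      have e : (8:ℝ) / τ = 2 / τ + 6 / τ := by ring
      rw [e]; linarith
    have key : ∀ a b : EuclideanSpace ℝ (Fin (n + 1)), ‖a‖ ≤ ‖b‖ →
        ‖Stmt15Aux.PsiA τ r ν a - Stmt15Aux.PsiA τ r ν b‖ ≤ 8 / τ * ‖a - b‖ := by
      intro a b h
      refine (Stmt15Aux.Psi_lip_aux hτ0 hτ1 hr hν a b h).trans ?_
      exact mul_le_mul_of_nonneg_right h58 (norm_nonneg _)
    rcases le_total ‖x‖ ‖y‖ with h | h
    · exact key x y h
    · rw [norm_sub_rev, norm_sub_rev x y]; exact key y x h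
  · -- support
    have hsub : {x : EuclideanSpace ℝ (Fin (n + 1)) | Stmt15Aux.PhiA τ r ν x ≠ x} ⊆ closedBall (0 : EuclideanSpace ℝ (Fin (n + 1))) (3 * r / 2) := by
      intro x hx
      rw [mem_closedBall, dist_zero_right]
      by_contra h
      push_neg at h
      exact hx (Stmt15Aux.Phi_eq_id hr x h.le)
    refine (closure_minimal hsub Metric.isClosed_closedBall).trans ?_
    intro w hw
    rw [mem_closedBall, dist_zero_right] at hw
    rw [mem_ball, dist_zero_right]
    linarith
  · exact Stmt15Aux.Phi_image_ball hτ0 hτ1 hr hν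
  · intro t ht
    obtain ⟨ht0, htr⟩ := ht
    have hset : {y ∈ ball (0 : EuclideanSpace ℝ (Fin (n + 1))) t | |(inner ℝ ν y : ℝ)| < τ * t}
        = {y : EuclideanSpace ℝ (Fin (n + 1)) | Stmt15Aux.phiA τ ν y < t} := Stmt15Aux.slab_eq hτ0 t
    rw [hset, Stmt15Aux.frontier_slab hτ0 hν ht0,
      Stmt15Aux.Phi_image_sphere hτ0 hτ1 hr hν ht0 htr]
end
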